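/- arXiv:1706.05796 — 9 statements merged into one kernel-verified Lean document; each statement's English description precedes it below -/
import Mathlib

section
/- There exists a constant C > 0, depending only on a, V_R and V_F, such that for every bounded measurable I : ℝ → ℝ, every function σ : [0,∞) → [0,∞), every w ∈ ℝ and every N̄ ∈ [0,∞), one has Z_{N̄,I}(w) ≤ C · exp( (‖I‖_∞ + |w|₋ σ(N̄))² / a ). -/
open MeasureTheory Real Set Filter

/-- The partition function `Z_{N̄,I}(w)` of the stationary LIF problem. -/
noncomputable def Zfun (a VR VF : ℝ) (I σ : ℝ → ℝ) (w N : ℝ) : ℝ :=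
  ∫ v in Set.Iic VF, ∫ v' in Set.Icc (max VR v) VF,
    Real.exp ((v' - v) * (v' + v - 2 * I w - 2 * w * σ N) / (2 * a))

/-!
With `u = v' - v ≥ 0` and drift `μ = I w + w σ(N̄) ≥ -M`, where `M = ‖I‖_∞ + |w|₋ σ(N̄)`, the
exponent times `2a` is `2u(v' - μ) - u² ≤ 2u(V_F + M) - u²`. Completing the square while keeping
a quarter of `-u²` bounds this by `4V_F² + 2M² - u²/4`, and `v' ≥ V_R` gives
`u² ≥ (v - V_R)² - (V_F - V_R)²`. So the integrand is at most `exp (M² / a)` times a constant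
times a Gaussian in `v`; the `v'`-interval has length at most `V_F - V_R`.
-/

lemma sub_mul_add_sub_two_mul_le {VR VF M μ v v' : ℝ} (hvv' : v ≤ v') (hVR : VR ≤ v')
    (hVF : v' ≤ VF) (hμ : -M ≤ μ) :
    (v' - v) * (v' + v - 2 * μ) ≤
      2 * M ^ 2 + 4 * VF ^ 2 + (VF - VR) ^ 2 / 4 - (v - VR) ^ 2 / 4 := by
  set u := v' - v
  have hu0 : 0 ≤ u := sub_nonneg.mpr hvv'
  have hdrift : (v' - v) * (v' + v - 2 * μ) ≤ 2 * u * (VF + M) - u ^ 2 := by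
    nlinarith [mul_le_mul_of_nonneg_left (show v' - μ ≤ VF + M by linarith) hu0]
  have hsquare : 2 * u * (VF + M) - u ^ 2 ≤ 4 * VF ^ 2 + 2 * M ^ 2 - u ^ 2 / 4 := by
    nlinarith [sq_nonneg (3 * u - 4 * (VF + M)), sq_nonneg (2 * VF - M)]
  have hu_sq : (v - VR) ^ 2 - (VF - VR) ^ 2 ≤ u ^ 2 := by
    rcases le_total v VR with h | h <;> nlinarith
  linarith

lemma exp_integrand_le {a VR VF M μ v v' : ℝ} (ha : 0 < a) (hvv' : v ≤ v') (hVR : VR ≤ v')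
    (hVF : v' ≤ VF) (hμ : -M ≤ μ) :
    exp ((v' - v) * (v' + v - 2 * μ) / (2 * a)) ≤
      exp ((16 * VF ^ 2 + (VF - VR) ^ 2) / (8 * a) + M ^ 2 / a) *
        exp (-(8 * a)⁻¹ * (v - VR) ^ 2) := by
  rw [← exp_add, exp_le_exp]
  have hrhs : (16 * VF ^ 2 + (VF - VR) ^ 2) / (8 * a) + M ^ 2 / a + -(8 * a)⁻¹ * (v - VR) ^ 2 =
      (2 * M ^ 2 + 4 * VF ^ 2 + (VF - VR) ^ 2 / 4 - (v - VR) ^ 2 / 4) / (2 * a) := by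
    field_simp
    ring
  rw [hrhs]
  gcongr
  exact sub_mul_add_sub_two_mul_le hvv' hVR hVF hμ

lemma integral_exp_neg_mul_sub_sq (b c : ℝ) : ∫ v, exp (-b * (v - c) ^ 2) = √(π / b) :=
  (integral_sub_right_eq_self (fun v ↦ exp (-b * v ^ 2)) c).trans (integral_gaussian b)

lemma Zfun_le_of_neg_le {a VR VF M : ℝ} {I σ : ℝ → ℝ} {w N : ℝ} (ha : 0 < a) (hV : VR ≤ VF)
    (hM : -M ≤ I w + w * σ N) :
    Zfun a VR VF I σ w N ≤ (VF - VR) * √(π / (8 * a)⁻¹) *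
      exp ((16 * VF ^ 2 + (VF - VR) ^ 2) / (8 * a)) * exp (M ^ 2 / a) := by
  set K := exp ((16 * VF ^ 2 + (VF - VR) ^ 2) / (8 * a) + M ^ 2 / a)
  set g : ℝ → ℝ := fun v ↦ exp (-(8 * a)⁻¹ * (v - VR) ^ 2)
  have hg : Integrable g := (integrable_exp_neg_mul_sq (by positivity)).comp_sub_right VR
  have inner : ∀ v ≤ VF, ∫ v' in Icc (max VR v) VF,
      exp ((v' - v) * (v' + v - 2 * I w - 2 * w * σ N) / (2 * a)) ≤ (VF - VR) * K * g v := by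
    intro v hv
    have hbound : ∀ v' ∈ Icc (max VR v) VF,
        ‖exp ((v' - v) * (v' + v - 2 * I w - 2 * w * σ N) / (2 * a))‖ ≤ K * g v := by
      rintro v' ⟨hv', hv'F⟩
      rw [norm_of_nonneg (exp_pos _).le,
        show v' + v - 2 * I w - 2 * w * σ N = v' + v - 2 * (I w + w * σ N) by ring]
      exact exp_integrand_le ha (le_of_max_le_right hv') (le_of_max_le_left hv') hv'F hM
    calc _ ≤ K * g v * volume.real (Icc (max VR v) VF) :=
          (le_abs_self _).trans (norm_setIntegral_le_of_norm_le_const measure_Icc_lt_top hbound)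
      _ ≤ K * g v * (VF - VR) := by
          gcongr
          rw [volume_real_Icc]
          exact max_le (by linarith [le_max_left VR v]) (by linarith)
      _ = (VF - VR) * K * g v := by ring
  calc Zfun a VR VF I σ w N ≤ ∫ v in Iic VF, (VF - VR) * K * g v := by
        refine integral_mono_of_nonneg
          (ae_of_all _ fun v ↦ integral_nonneg fun _ ↦ (exp_pos _).le)
          (hg.integrableOn.const_mul _) ?_
        exact (ae_restrict_iff' measurableSet_Iic).mpr (ae_of_all _ inner)
    _ ≤ ∫ v, (VF - VR) * K * g v :=
        setIntegral_le_integral (hg.const_mul _) (ae_of_all _ fun v ↦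
          mul_nonneg (mul_nonneg (by linarith) (exp_pos _).le) (exp_pos _).le)
    _ = _ := by
        simp only [K]
        rw [integral_const_mul, integral_exp_neg_mul_sub_sq, exp_add]
        ring

/-- Upper bound on `Z_{N̄,I}(w)` (Lemma 3.2, estimate (3.10), upper part). -/
theorem stmt0 (a VR VF : ℝ) (ha : 0 < a) (hV : VR < VF) :
    ∃ C > 0, ∀ I : ℝ → ℝ, Measurable I →
      ∀ nI : ℝ, (∀ x, |I x| ≤ nI) →
      ∀ σ : ℝ → ℝ, (∀ N, 0 ≤ N → 0 ≤ σ N) →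
      ∀ w N : ℝ, 0 ≤ N →
        Zfun a VR VF I σ w N ≤ C * Real.exp ((nI + max (-w) 0 * σ N) ^ 2 / a) := by
  refine ⟨(VF - VR) * √(π / (8 * a)⁻¹) * exp ((16 * VF ^ 2 + (VF - VR) ^ 2) / (8 * a)),
    mul_pos (mul_pos (sub_pos.mpr hV) (sqrt_pos.mpr (by positivity))) (exp_pos _), ?_⟩
  intro I _ nI hnI σ hσ w N hN
  have hdrift : -(nI + max (-w) 0 * σ N) ≤ I w + w * σ N := by
    have := mul_le_mul_of_nonneg_right (le_max_left (-w) 0) (hσ N hN)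
    linarith [neg_abs_le (I w), hnI w]
  exact Zfun_le_of_neg_le ha hV.le hdrift
end

section
/- There exists a constant C > 0, depending only on a, V_R and V_F, such that for every bounded measurable I : ℝ → ℝ, every function σ : [0,∞) → [0,∞), every w ∈ ℝ and every N̄ ∈ [0,∞), one has Z_{N̄,I}(w) ≥ C · min( 1 / (‖I‖_∞ + |w|₊ σ(N̄)) , V_F − V_R )². -/
open MeasureTheory Real Set Filter

/-!
Writing `c = 2 I(w) + 2 w σ(N̄)`, the integrand factors as
`exp (-(v - c/2)² / 2a) * exp ((v' - c/2)² / 2a)`: a Gaussian in `v` times an inner integral over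
a subinterval of `[V_R, V_F]`, which is bounded, so the outer integral converges. For the lower
bound, let `M = ‖I‖_∞ + |w|₊ σ(N̄) ≥ c / 2` and `m = min (1 / M) (V_F - V_R)`. Since `m M ≤ 1`,
the exponent is bounded below by a constant depending only on `a, V_R, V_F` on the square
`[V_F - m, V_F - m/2] × [V_F - m/2, V_F]`, whose area is `(m/2)²`.
-/

lemma exp_mul_sub_div_eq (a c v v' : ℝ) :
    exp ((v' - v) * (v' + v - c) / (2 * a)) =
      exp (-(2 * a)⁻¹ * (v - c / 2) ^ 2) * exp ((2 * a)⁻¹ * (v' - c / 2) ^ 2) := by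
  rw [← exp_add]
  congr 1
  ring

lemma antitone_setIntegral_Icc_max {φ : ℝ → ℝ} {VR VF : ℝ} (hφ : IntegrableOn φ (Icc VR VF))
    (hφ0 : 0 ≤ φ) : Antitone fun v => ∫ x in Icc (max VR v) VF, φ x := fun _ _ h =>
  setIntegral_mono_set (hφ.mono_set (Icc_subset_Icc (le_max_left _ _) le_rfl))
    (Eventually.of_forall hφ0) (Icc_subset_Icc (max_le_max le_rfl h) le_rfl).eventuallyLE

lemma integrable_setIntegral_Icc_max_exp {a : ℝ} (ha : 0 < a) (c VR VF : ℝ) :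
    Integrable fun v => ∫ v' in Icc (max VR v) VF, exp ((v' - v) * (v' + v - c) / (2 * a)) := by
  set φ : ℝ → ℝ := fun v' => exp ((2 * a)⁻¹ * (v' - c / 2) ^ 2)
  have hφ : IntegrableOn φ (Icc VR VF) := (by fun_prop : Continuous φ).integrableOn_Icc
  have hφ0 : 0 ≤ φ := fun _ => (exp_pos _).le
  have hgauss : Integrable fun v : ℝ => exp (-(2 * a)⁻¹ * (v - c / 2) ^ 2) :=
    (integrable_exp_neg_mul_sq (by positivity)).comp_sub_right (c / 2)
  simp_rw [exp_mul_sub_div_eq, integral_const_mul]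
  refine hgauss.mul_bdd (c := ∫ x in Icc VR VF, φ x) (antitone_setIntegral_Icc_max hφ hφ0).measurable.aestronglyMeasurable
    (Eventually.of_forall fun v => ?_)
  rw [norm_of_nonneg (setIntegral_nonneg measurableSet_Icc fun x _ => hφ0 x)]
  exact setIntegral_mono_set hφ (Eventually.of_forall hφ0)
    (Icc_subset_Icc (le_max_left _ _) le_rfl).eventuallyLE

lemma mul_sq_le_integral_Iic_Icc_max {f : ℝ → ℝ → ℝ} {VR VF δ ε : ℝ}
    (hf0 : ∀ v v', 0 ≤ f v v') (hfc : ∀ v, Continuous (f v))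
    (hint : IntegrableOn (fun v => ∫ v' in Icc (max VR v) VF, f v v') (Iic VF))
    (hδ : 0 ≤ δ) (hδV : 2 * δ ≤ VF - VR)
    (hε : ∀ v ∈ Icc (VF - 2 * δ) (VF - δ), ∀ v' ∈ Icc (VF - δ) VF, ε ≤ f v v') :
    ε * δ ^ 2 ≤ ∫ v in Iic VF, ∫ v' in Icc (max VR v) VF, f v v' := by
  have hinner : ∀ v ∈ Icc (VF - 2 * δ) (VF - δ),
      ε * δ ≤ ∫ v' in Icc (max VR v) VF, f v v' := by
    intro v hv
    calc ε * δ = ε * volume.real (Icc (VF - δ) VF) := by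
          rw [volume_real_Icc_of_le (by linarith)]; ring
      _ ≤ ∫ v' in Icc (VF - δ) VF, f v v' :=
          setIntegral_ge_of_const_le_real measurableSet_Icc measure_Icc_lt_top.ne (hε v hv)
            (hfc v).integrableOn_Icc
      _ ≤ ∫ v' in Icc (max VR v) VF, f v v' :=
          setIntegral_mono_set (hfc v).integrableOn_Icc (Eventually.of_forall (hf0 v))
            (Icc_subset_Icc (max_le (by linarith) hv.2) le_rfl).eventuallyLE
  have hsub : Icc (VF - 2 * δ) (VF - δ) ⊆ Iic VF := fun v hv => hv.2.trans (by linarith)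
  calc ε * δ ^ 2 = ε * δ * volume.real (Icc (VF - 2 * δ) (VF - δ)) := by
        rw [volume_real_Icc_of_le (by linarith)]; ring
    _ ≤ ∫ v in Icc (VF - 2 * δ) (VF - δ), ∫ v' in Icc (max VR v) VF, f v v' :=
        setIntegral_ge_of_const_le_real measurableSet_Icc measure_Icc_lt_top.ne hinner
          (hint.mono_set hsub)
    _ ≤ ∫ v in Iic VF, ∫ v' in Icc (max VR v) VF, f v v' :=
        setIntegral_mono_set hint
          (Eventually.of_forall fun v => setIntegral_nonneg measurableSet_Icc fun v' _ => hf0 v v')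
          hsub.eventuallyLE

lemma neg_le_sub_mul_add_sub {VR VF c M m v v' : ℝ} (hm0 : 0 ≤ m) (hmV : m ≤ VF - VR)
    (hmM : m * M ≤ 1) (hc : c ≤ 2 * M) (hv : VF - m ≤ v) (hvv' : v ≤ v') (hv' : v' ≤ VF) :
    -2 * ((VF - VR) * |VF| + (VF - VR) ^ 2 + 1) ≤ (v' - v) * (v' + v - c) := by
  have hmVF : m * |VF| ≤ (VF - VR) * |VF| := mul_le_mul_of_nonneg_right hmV (abs_nonneg VF)
  have hm2 : m ^ 2 ≤ (VF - VR) ^ 2 := pow_le_pow_left₀ hm0 hmV 2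
  rcases le_or_gt 0 (v' + v - c) with hs | hs
  · nlinarith [mul_nonneg (sub_nonneg.2 hvv') hs, abs_nonneg VF]
  · have ht : m * (v' + v - c) ≤ (v' - v) * (v' + v - c) :=
      mul_le_mul_of_nonpos_right (by linarith) hs.le
    nlinarith [neg_abs_le VF, mul_le_mul_of_nonneg_left (neg_abs_le VF) hm0]

/-- Lower bound on `Z_{N̄,I}(w)` (Lemma 3.2, estimate (3.10), lower part). -/
theorem stmt1 (a VR VF : ℝ) (ha : 0 < a) (hV : VR < VF) :
    ∃ C > 0, ∀ I : ℝ → ℝ, Measurable I →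
      ∀ nI : ℝ, (∀ x, |I x| ≤ nI) →
      ∀ σ : ℝ → ℝ, (∀ N, 0 ≤ N → 0 ≤ σ N) →
      ∀ w N : ℝ, 0 ≤ N →
        C * (min (1 / (nI + max w 0 * σ N)) (VF - VR)) ^ 2 ≤ Zfun a VR VF I σ w N := by
  refine ⟨exp (-2 * ((VF - VR) * |VF| + (VF - VR) ^ 2 + 1) / (2 * a)) / 4, by positivity, ?_⟩
  intro I _ nI hnI σ hσ w N hN
  set c := 2 * I w + 2 * w * σ N
  set M := nI + max w 0 * σ N
  set m := min (1 / M) (VF - VR)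
  have hM : 0 ≤ M :=
    add_nonneg ((abs_nonneg _).trans (hnI 0)) (mul_nonneg (le_max_right _ _) (hσ N hN))
  have hm0 : 0 ≤ m := le_min (by positivity) (sub_pos.2 hV).le
  have hmV : m ≤ VF - VR := min_le_right _ _
  have hmM : m * M ≤ 1 := calc
    m * M ≤ 1 / M * M := mul_le_mul_of_nonneg_right (min_le_left _ _) hM
    _ ≤ 1 := by rw [one_div]; exact inv_mul_le_one_of_le₀ le_rfl hM
  have hc : c ≤ 2 * M := by
    have := mul_le_mul_of_nonneg_right (le_max_left w 0) (hσ N hN)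
    linarith [(abs_le.1 (hnI w)).2]
  have hZ : Zfun a VR VF I σ w N =
      ∫ v in Iic VF, ∫ v' in Icc (max VR v) VF, exp ((v' - v) * (v' + v - c) / (2 * a)) := by
    simp only [Zfun, c, sub_sub]
  rw [hZ]
  calc _ = exp (-2 * ((VF - VR) * |VF| + (VF - VR) ^ 2 + 1) / (2 * a)) * (m / 2) ^ 2 := by ring
    _ ≤ _ := mul_sq_le_integral_Iic_Icc_max (fun _ _ => (exp_pos _).le) (fun _ => by fun_prop)
        (integrable_setIntegral_Icc_max_exp ha c VR VF).integrableOn (by positivity)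
        (by linarith) fun v hv v' hv' => exp_le_exp.2 <| div_le_div_of_nonneg_right
          (neg_le_sub_mul_add_sub hm0 hmV hmM hc (by linarith [hv.1]) (by linarith [hv.2, hv'.1])
            hv'.2) (by positivity)
end

section
/- Let N̄ ∈ [0,∞) be such that σ(N̄) > 0. Then Z_{N̄,I}(w) tends to 0 as w → +∞. -/
/-!
For `v ≤ v' ≤ V_F` and `|I| ≤ n_I` the exponent is at most `-c (v' - v)`, where
`a c = w σ(N̄) - n_I - V_F`. Hence the inner integral is at most `exp (-c (max V_R v - v)) / c`,
and integrating in `v` gives `Z_{N̄,I}(w) ≤ (1/c + V_F - V_R) / c`, while `c → ∞` as `w → ∞`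
because `σ(N̄) > 0`.
-/

open MeasureTheory Real Set Filter Topology

lemma exponent_le_neg_mul_sub {a c x y B J M w s : ℝ} (ha : 0 < a) (hxy : x ≤ y) (hyB : y ≤ B)
    (hJ : -M ≤ J) (hc : a * c ≤ w * s - M - B) :
    (y - x) * (y + x - 2 * J - 2 * w * s) / (2 * a) ≤ -c * (y - x) := by
  rw [div_le_iff₀ (by positivity)]
  nlinarith [mul_le_mul_of_nonneg_left (show y + x - 2 * J - 2 * w * s ≤ -2 * (a * c) by linarith)
    (sub_nonneg.2 hxy)]

section ExpIntegrals

variable {c : ℝ}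

lemma setIntegral_Icc_exp_neg_mul_sub_le (hc : 0 < c) (x A B : ℝ) :
    ∫ y in Icc A B, exp (-c * (y - x)) ≤ exp (-c * (A - x)) / c := by
  have hfactor : ∀ y, exp (-c * (y - x)) = exp (c * x) * exp (-c * y) := fun y => by
    rw [← exp_add]; ring_nf
  have hint : IntegrableOn (fun y => exp (-c * (y - x))) (Ioi A) := by
    simp_rw [hfactor]
    exact (integrableOn_exp_mul_Ioi (neg_lt_zero.2 hc) A).const_mul _
  calc ∫ y in Icc A B, exp (-c * (y - x))
      = ∫ y in Ioc A B, exp (-c * (y - x)) := integral_Icc_eq_integral_Ioc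
    _ ≤ ∫ y in Ioi A, exp (-c * (y - x)) :=
        setIntegral_mono_set hint (ae_of_all _ fun _ => (exp_pos _).le)
          Ioc_subset_Ioi_self.eventuallyLE
    _ = exp (-c * (A - x)) / c := by
        simp_rw [hfactor]
        rw [integral_const_mul, integral_exp_mul_Ioi (neg_lt_zero.2 hc), neg_div_neg_eq,
          mul_div_assoc]

lemma exp_neg_mul_max_sub_of_le {VR v : ℝ} (hv : v ≤ VR) :
    exp (-c * (max VR v - v)) = exp (-c * VR) * exp (c * v) := by
  rw [max_eq_left hv, ← exp_add]; ring_nf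

lemma integrableOn_Iic_exp_neg_mul_max_sub (hc : 0 < c) (VR : ℝ) :
    IntegrableOn (fun v => exp (-c * (max VR v - v))) (Iic VR) :=
  IntegrableOn.congr_fun ((integrableOn_exp_mul_Iic hc VR).const_mul _)
    (fun _ hv => (exp_neg_mul_max_sub_of_le hv).symm) measurableSet_Iic

lemma integrableOn_exp_neg_mul_max_sub (hc : 0 < c) (VR VF : ℝ) :
    IntegrableOn (fun v => exp (-c * (max VR v - v))) (Iic VF) :=
  ((integrableOn_Iic_exp_neg_mul_max_sub hc VR).union
    (by fun_prop : Continuous fun v => exp (-c * (max VR v - v))).integrableOn_Ioc).mono_set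
    Iic_subset_Iic_union_Ioc

lemma integral_exp_neg_mul_max_sub (hc : 0 < c) {VR VF : ℝ} (hV : VR ≤ VF) :
    ∫ v in Iic VF, exp (-c * (max VR v - v)) = c⁻¹ + (VF - VR) := by
  have hconst : ∀ v ∈ Ioc VR VF, exp (-c * (max VR v - v)) = 1 := fun v hv => by
    rw [max_eq_right hv.1.le, sub_self, mul_zero, exp_zero]
  rw [← Iic_union_Ioc_eq_Iic hV, setIntegral_union (Iic_disjoint_Ioc le_rfl) measurableSet_Ioc
      (integrableOn_Iic_exp_neg_mul_max_sub hc VR) (by fun_prop : Continuous fun v =>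
        exp (-c * (max VR v - v))).integrableOn_Ioc,
    setIntegral_congr_fun measurableSet_Iic fun _ hv => exp_neg_mul_max_sub_of_le hv,
    integral_const_mul, integral_exp_mul_Iic hc, setIntegral_congr_fun measurableSet_Ioc hconst,
    setIntegral_const, Real.volume_real_Ioc_of_le hV, smul_eq_mul, mul_one, mul_div_assoc',
    ← exp_add, neg_mul, neg_add_cancel, exp_zero, one_div]

end ExpIntegrals

lemma Zfun_nonneg (a VR VF : ℝ) (I σ : ℝ → ℝ) (w N : ℝ) : 0 ≤ Zfun a VR VF I σ w N :=
  setIntegral_nonneg measurableSet_Iic fun _ _ => integral_nonneg fun _ => (exp_pos _).le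

lemma Zfun_le {a VR VF nI w c : ℝ} {I σ : ℝ → ℝ} {N : ℝ} (ha : 0 < a) (hV : VR ≤ VF)
    (hI : ∀ x, |I x| ≤ nI) (hc : 0 < c) (hac : a * c ≤ w * σ N - nI - VF) :
    Zfun a VR VF I σ w N ≤ (c⁻¹ + (VF - VR)) / c := by
  have hinner : ∀ v ∈ Iic VF, ∫ v' in Icc (max VR v) VF,
      exp ((v' - v) * (v' + v - 2 * I w - 2 * w * σ N) / (2 * a))
        ≤ exp (-c * (max VR v - v)) / c := fun v _ =>
    calc _ ≤ ∫ v' in Icc (max VR v) VF, exp (-c * (v' - v)) :=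
          setIntegral_mono_on (by fun_prop : Continuous _).integrableOn_Icc
            (by fun_prop : Continuous _).integrableOn_Icc measurableSet_Icc fun _ hv' =>
              exp_le_exp.2 <| exponent_le_neg_mul_sub ha ((le_max_right _ _).trans hv'.1) hv'.2
                (abs_le.1 (hI w)).1 hac
      _ ≤ _ := setIntegral_Icc_exp_neg_mul_sub_le hc v _ VF
  calc Zfun a VR VF I σ w N ≤ ∫ v in Iic VF, exp (-c * (max VR v - v)) / c :=
        integral_mono_of_nonneg (ae_of_all _ fun _ => integral_nonneg fun _ => (exp_pos _).le)
          ((integrableOn_exp_neg_mul_max_sub hc VR VF).div_const c)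
          ((ae_restrict_iff' measurableSet_Iic).2 (ae_of_all _ hinner))
    _ = (c⁻¹ + (VF - VR)) / c := by rw [integral_div, integral_exp_neg_mul_max_sub hc hV]

theorem stmt2_general (a VR VF : ℝ) (ha : 0 < a) (hV : VR < VF)
    (I : ℝ → ℝ) (nI : ℝ) (hI : ∀ x, |I x| ≤ nI)
    (σ : ℝ → ℝ)
    (N : ℝ) (hσN : 0 < σ N) :
    Filter.Tendsto (fun w => Zfun a VR VF I σ w N) Filter.atTop (nhds 0) := by
  set c : ℝ → ℝ := fun w => (w * σ N - nI - VF) / a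
  have hc : Tendsto c atTop atTop :=
    (tendsto_atTop_add_const_right _ _
      (tendsto_atTop_add_const_right _ _ (tendsto_id.atTop_mul_const hσN))).atTop_div_const ha
  have hbound : Tendsto (fun w => ((c w)⁻¹ + (VF - VR)) / c w) atTop (𝓝 0) := by
    simpa [div_eq_mul_inv] using (hc.inv_tendsto_atTop.add_const (VF - VR)).mul
      hc.inv_tendsto_atTop
  refine squeeze_zero' (Eventually.of_forall fun w => Zfun_nonneg ..) ?_ hbound
  filter_upwards [hc.eventually_gt_atTop 0] with w hw
  exact Zfun_le ha hV.le hI hw (mul_div_cancel₀ _ ha.ne').le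

/-- `Z_{N̄,I}(w) → 0` as `w → +∞` when `σ(N̄) > 0` (Lemma 3.2, estimate (3.11)). -/
theorem stmt2 (a VR VF : ℝ) (ha : 0 < a) (hV : VR < VF)
    (I : ℝ → ℝ) (hImeas : Measurable I) (nI : ℝ) (hI : ∀ x, |I x| ≤ nI)
    (σ : ℝ → ℝ) (hσ0 : ∀ N, 0 ≤ N → 0 ≤ σ N)
    (N : ℝ) (hN : 0 ≤ N) (hσN : 0 < σ N) :
    Filter.Tendsto (fun w => Zfun a VR VF I σ w N) Filter.atTop (nhds 0) :=
  stmt2_general a VR VF ha hV I nI hI σ N hσN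
end

section
/- Let N̄ ∈ [0,∞) be such that σ(N̄) > 0. Then Z_{N̄,I}(w) tends to +∞ as w → −∞. -/
open MeasureTheory Real Set Filter

/-!
`Z_{N̄,I}(w)` depends on `w` only through the drift `c = 2 I(w) + 2 w σ(N̄)`, which tends to `-∞`
as `w → -∞` because `I` is bounded and `σ(N̄) > 0`. On the square `v ∈ [V_R, V_R + δ]`,
`v' ∈ [V_F - δ, V_F]` with `δ = (V_F - V_R)/3` the exponent is at least `δ (2 V_R - c) / (2a)`,
so the integral is at least `δ² exp (δ (2 V_R - c) / (2a)) → ∞`. Turning this into a lower bound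
for the Bochner integral needs the inner integral to be integrable in `v`: it factors as the
Gaussian `exp ((c v - v²) / (2a))` times a bounded antitone function of `max V_R v`.
-/

theorem measureReal_mul_le_setIntegral {α : Type*} [MeasurableSpace α] {μ : Measure α}
    {f : α → ℝ} {s t : Set α} {b : ℝ} (hf : IntegrableOn f s μ)
    (hf₀ : ∀ᵐ x ∂μ.restrict s, 0 ≤ f x) (ht : MeasurableSet t) (hts : t ⊆ s) (htμ : μ t ≠ ⊤)
    (hb : ∀ x ∈ t, b ≤ f x) :
    μ.real t * b ≤ ∫ x in s, f x ∂μ :=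
  calc μ.real t * b = ∫ _ in t, b ∂μ := by rw [setIntegral_const, smul_eq_mul]
    _ ≤ ∫ x in t, f x ∂μ := setIntegral_mono_on (integrableOn_const htμ) (hf.mono_set hts) ht hb
    _ ≤ ∫ x in s, f x ∂μ := setIntegral_mono_set hf hf₀ hts.eventuallyLE

theorem antitone_setIntegral_Icc {f : ℝ → ℝ} (hf : Continuous f) (hf₀ : 0 ≤ f) (b : ℝ) :
    Antitone fun u => ∫ x in Icc u b, f x := fun _ _ huv =>
  setIntegral_mono_set hf.integrableOn_Icc (ae_of_all _ hf₀) (Icc_subset_Icc_left huv).eventuallyLE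

theorem integrable_exp_mul_sub_sq_div {a : ℝ} (ha : 0 < a) (c : ℝ) :
    Integrable fun v : ℝ => exp ((c * v - v ^ 2) / (2 * a)) := by
  have hgauss := ((integrable_exp_neg_mul_sq (b := 1 / (2 * a)) (by positivity)).comp_sub_right
    (c / 2)).const_mul (exp (c ^ 2 / (8 * a)))
  refine hgauss.congr (ae_of_all _ fun v => ?_)
  simp only [← exp_add]
  congr 1
  field_simp
  ring

noncomputable def innerIntegral (a VR VF c v : ℝ) : ℝ :=
  ∫ v' in Icc (max VR v) VF, exp ((v' - v) * (v' + v - c) / (2 * a))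

theorem Zfun_eq (a VR VF : ℝ) (I σ : ℝ → ℝ) (w N : ℝ) :
    Zfun a VR VF I σ w N = ∫ v in Iic VF, innerIntegral a VR VF (2 * I w + 2 * w * σ N) v := by
  simp only [Zfun, innerIntegral, sub_sub]

namespace innerIntegral

variable {a VR VF c : ℝ}

theorem nonneg (v : ℝ) : 0 ≤ innerIntegral a VR VF c v :=
  setIntegral_nonneg measurableSet_Icc fun _ _ => (exp_pos _).le

theorem eq_mul (a VR VF c v : ℝ) :
    innerIntegral a VR VF c v = exp ((c * v - v ^ 2) / (2 * a)) *
      ∫ v' in Icc (max VR v) VF, exp ((v' ^ 2 - c * v') / (2 * a)) := by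
  rw [innerIntegral, ← integral_const_mul]
  congr 1 with v'
  rw [← exp_add]
  congr 1
  ring

theorem integrable (ha : 0 < a) : Integrable (innerIntegral a VR VF c) := by
  set H : ℝ → ℝ := fun u => ∫ v' in Icc u VF, exp ((v' ^ 2 - c * v') / (2 * a))
  have hH : Antitone H := antitone_setIntegral_Icc (by fun_prop) (fun _ => (exp_pos _).le) VF
  have hH₀ : ∀ u, 0 ≤ H u := fun u => setIntegral_nonneg measurableSet_Icc fun _ _ => (exp_pos _).le
  have hbdd : ∀ v, ‖H (max VR v)‖ ≤ H VR := fun v => by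
    rw [norm_of_nonneg (hH₀ _)]
    exact hH (le_max_left _ _)
  have hmeas : AEStronglyMeasurable (fun v => H (max VR v)) :=
    (hH.measurable.comp (measurable_const.max measurable_id)).aestronglyMeasurable
  exact ((integrable_exp_mul_sub_sq_div ha c).mul_bdd hmeas (ae_of_all _ hbdd)).congr
    (ae_of_all _ fun v => (eq_mul a VR VF c v).symm)

theorem le_of_mem_Icc (ha : 0 < a) {δ : ℝ} (hδ : 0 ≤ δ) (hδV : 3 * δ ≤ VF - VR)
    (hc : c ≤ 2 * VR) {v : ℝ} (hv : v ∈ Icc VR (VR + δ)) :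
    δ * exp (δ * (2 * VR - c) / (2 * a)) ≤ innerIntegral a VR VF c v := by
  have hvol : volume.real (Icc (VF - δ) VF) = δ := by
    rw [volume_real_Icc_of_le (by linarith)]
    ring
  nth_rw 1 [← hvol]
  rw [innerIntegral, max_eq_right hv.1]
  refine measureReal_mul_le_setIntegral (by fun_prop : Continuous _).integrableOn_Icc
    (ae_of_all _ fun _ => (exp_pos _).le) measurableSet_Icc
    (Icc_subset_Icc_left (by linarith [hv.2])) measure_Icc_lt_top.ne fun v' hv' => ?_
  gcongr <;> linarith [hv.1, hv.2, hv'.1]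

theorem le_setIntegral (ha : 0 < a) {δ : ℝ} (hδ : 0 ≤ δ) (hδV : 3 * δ ≤ VF - VR)
    (hc : c ≤ 2 * VR) :
    δ * (δ * exp (δ * (2 * VR - c) / (2 * a))) ≤ ∫ v in Iic VF, innerIntegral a VR VF c v := by
  have hvol : volume.real (Icc VR (VR + δ)) = δ := by
    rw [volume_real_Icc_of_le (by linarith)]
    ring
  nth_rw 1 [← hvol]
  exact measureReal_mul_le_setIntegral (integrable ha).integrableOn (ae_of_all _ nonneg)
    measurableSet_Icc (fun v hv => (hv.2.trans (by linarith) : v ≤ VF)) measure_Icc_lt_top.ne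
    fun v hv => le_of_mem_Icc ha hδ hδV hc hv

end innerIntegral

theorem tendsto_setIntegral_innerIntegral_atBot {a VR VF : ℝ} (ha : 0 < a) (hV : VR < VF) :
    Tendsto (fun c => ∫ v in Iic VF, innerIntegral a VR VF c v) atBot atTop := by
  set δ := (VF - VR) / 3
  have hδ : 0 < δ := by positivity
  have hlower : Tendsto (fun c => δ * (δ * exp (δ * (2 * VR - c) / (2 * a)))) atBot atTop := by
    refine (tendsto_exp_atTop.comp ?_).const_mul_atTop hδ |>.const_mul_atTop hδ
    exact ((tendsto_atTop_add_const_left _ _ tendsto_neg_atBot_atTop).const_mul_atTop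
      hδ).atTop_div_const (by positivity)
  refine tendsto_atTop_mono' _ ?_ hlower
  filter_upwards [eventually_le_atBot (2 * VR)] with c hc
  exact innerIntegral.le_setIntegral ha hδ.le (by simp only [δ]; linarith) hc

theorem stmt3_general (a VR VF : ℝ) (ha : 0 < a) (hV : VR < VF)
    (I : ℝ → ℝ) (nI : ℝ) (hI : ∀ x, |I x| ≤ nI)
    (σ : ℝ → ℝ)
    (N : ℝ) (hσN : 0 < σ N) :
    Filter.Tendsto (fun w => Zfun a VR VF I σ w N) Filter.atBot Filter.atTop := by
  have hdrift : Tendsto (fun w => 2 * I w + 2 * w * σ N) atBot atBot := by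
    refine tendsto_atBot_mono (fun w => ?_) (tendsto_atBot_add_const_left _ (2 * nI)
      ((tendsto_id.const_mul_atBot two_pos).atBot_mul_const hσN))
    show 2 * I w + 2 * w * σ N ≤ 2 * nI + 2 * w * σ N
    linarith [(abs_le.1 (hI w)).2]
  simp only [Zfun_eq]
  exact (tendsto_setIntegral_innerIntegral_atBot ha hV).comp hdrift

/-- `Z_{N̄,I}(w) → +∞` as `w → −∞` when `σ(N̄) > 0` (Lemma 3.2, estimate (3.11)). -/
theorem stmt3 (a VR VF : ℝ) (ha : 0 < a) (hV : VR < VF)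
    (I : ℝ → ℝ) (hImeas : Measurable I) (nI : ℝ) (hI : ∀ x, |I x| ≤ nI)
    (σ : ℝ → ℝ) (hσ0 : ∀ N, 0 ≤ N → 0 ≤ σ N)
    (N : ℝ) (hN : 0 ≤ N) (hσN : 0 < σ N) :
    Filter.Tendsto (fun w => Zfun a VR VF I σ w N) Filter.atBot Filter.atTop :=
  stmt3_general a VR VF ha hV I nI hI σ N hσN
end

section
/- Assume σ : [0,∞) → [0,∞) is differentiable at a point N̄ > 0. Then for every fixed w ∈ ℝ the map N ↦ Z_{N,I}(w) is differentiable at N̄ with derivative equal to − w σ'(N̄) · ∫_{v=−∞}^{V_F} ∫_{v'=max(V_R,v)}^{V_F} ((v'−v)/a) · exp( (v'−v)(v'+v−2I(w)−2w σ(N̄)) / (2a) ) dv' dv. -/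
open MeasureTheory Real Set Filter

lemma abs_mul_exp_sub_mul_le {y r d e : ℝ} (hy : 0 ≤ y) (hd : e + 1 ≤ d) :
    |y * exp (r - d * y)| ≤ exp (r - e * y) :=
  calc |y * exp (r - d * y)| = y * exp (r - d * y) := abs_of_nonneg (by positivity)
    _ ≤ exp y * exp (r - (e + 1) * y) := by
        gcongr
        linarith [add_one_le_exp y]
    _ = exp (r - e * y) := by rw [← exp_add]; ring_nf

section LaplaceTransform

variable {α : Type*} [MeasurableSpace α] {μ : Measure α} {q h : α → ℝ}

lemma integrable_mul_exp_sub_mul (hh : AEStronglyMeasurable h μ) (h0 : ∀ᵐ x ∂μ, 0 ≤ h x)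
    (hq : ∀ d, Integrable (fun x => exp (q x - d * h x)) μ) (d : ℝ) :
    Integrable (fun x => h x * exp (q x - d * h x)) μ :=
  (hq (d - 1)).mono' (hh.mul (hq d).1) <| h0.mono fun _ hx =>
    abs_mul_exp_sub_mul_le hx (by linarith)

theorem hasDerivAt_integral_exp_sub_mul (hh : AEStronglyMeasurable h μ)
    (h0 : ∀ᵐ x ∂μ, 0 ≤ h x) (hq : ∀ d, Integrable (fun x => exp (q x - d * h x)) μ)
    (d₀ : ℝ) :
    HasDerivAt (fun d => ∫ x, exp (q x - d * h x) ∂μ)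
      (∫ x, -(h x * exp (q x - d₀ * h x)) ∂μ) d₀ := by
  refine (hasDerivAt_integral_of_dominated_loc_of_deriv_le (Metric.ball_mem_nhds d₀ one_pos)
    (F' := fun d x => -(h x * exp (q x - d * h x)))
    (Eventually.of_forall fun d => (hq d).1) (hq d₀)
    (integrable_mul_exp_sub_mul hh h0 hq d₀).1.neg ?_ (hq (d₀ - 2)) ?_).2
  · filter_upwards [h0] with x hx d hd
    rw [Real.norm_eq_abs, abs_neg]
    refine abs_mul_exp_sub_mul_le hx ?_
    linarith [(abs_lt.mp (Real.dist_eq d d₀ ▸ Metric.mem_ball.mp hd)).1]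
  · refine Eventually.of_forall fun x d _ => ?_
    simpa [mul_comm] using (((hasDerivAt_id d).mul_const (h x)).const_sub (q x)).exp

end LaplaceTransform

theorem setIntegral_setIntegral_eq_setIntegral_prod {α β E : Type*} [MeasurableSpace α]
    [MeasurableSpace β] [NormedAddCommGroup E] [NormedSpace ℝ E]
    {μ : Measure α} {ν : Measure β} [SFinite μ] [SFinite ν] {A : Set α} {B : α → Set β}
    (hA : MeasurableSet A) (hS : MeasurableSet {p : α × β | p.1 ∈ A ∧ p.2 ∈ B p.1})
    {f : α × β → E} (hf : IntegrableOn f {p : α × β | p.1 ∈ A ∧ p.2 ∈ B p.1} (μ.prod ν)) :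
    ∫ x in A, ∫ y in B x, f (x, y) ∂ν ∂μ =
      ∫ p in {p : α × β | p.1 ∈ A ∧ p.2 ∈ B p.1}, f p ∂μ.prod ν := by
  set S := {p : α × β | p.1 ∈ A ∧ p.2 ∈ B p.1}
  rw [← integral_indicator hS, integral_prod _ ((integrable_indicator_iff hS).mpr hf),
    ← integral_indicator hA]
  congr 1
  funext x
  by_cases hx : x ∈ A
  · have hB : MeasurableSet (B x) :=
      (ext fun _ => ⟨And.right, fun hy => ⟨hx, hy⟩⟩ : Prod.mk x ⁻¹' S = B x) ▸
        measurable_prodMk_left hS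
    rw [indicator_of_mem hx, ← integral_indicator hB]
    congr 1
    funext y
    by_cases hy : y ∈ B x
    · rw [indicator_of_mem hy, indicator_of_mem (s := S) ⟨hx, hy⟩]
    · rw [indicator_of_notMem hy, indicator_of_notMem (s := S) fun h => hy h.2]
  · have hS0 (y : β) : S.indicator f (x, y) = 0 := indicator_of_notMem (fun h => hx h.1) f
    simp only [indicator_of_notMem hx, hS0, integral_zero]

def lifRegion (VR VF : ℝ) : Set (ℝ × ℝ) := {p | p.1 ∈ Iic VF ∧ p.2 ∈ Icc (max VR p.1) VF}

section lifRegion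

variable (VR VF : ℝ)

lemma measurableSet_lifRegion : MeasurableSet (lifRegion VR VF) :=
  (measurable_fst measurableSet_Iic).inter
    ((measurableSet_le (by fun_prop) measurable_snd).inter
      (measurableSet_le measurable_snd measurable_const))

lemma lifRegion_subset_prod : lifRegion VR VF ⊆ univ ×ˢ Icc VR VF :=
  fun _ hp => ⟨trivial, le_trans (le_max_left _ _) hp.2.1, hp.2.2⟩

lemma integral_integral_eq_setIntegral_lifRegion {f : ℝ × ℝ → ℝ}
    (hf : IntegrableOn f (lifRegion VR VF) (volume.prod volume)) :
    ∫ v in Iic VF, ∫ v' in Icc (max VR v) VF, f (v, v') =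
      ∫ p in lifRegion VR VF, f p ∂(volume.prod volume) :=
  setIntegral_setIntegral_eq_setIntegral_prod (B := fun v => Icc (max VR v) VF)
    measurableSet_Iic (measurableSet_lifRegion VR VF) hf

lemma ae_restrict_lifRegion_div_nonneg {a : ℝ} (ha : 0 < a) :
    ∀ᵐ p ∂(volume.prod volume).restrict (lifRegion VR VF), 0 ≤ (p.2 - p.1) / a := by
  filter_upwards [ae_restrict_mem (measurableSet_lifRegion VR VF)] with p hp
  exact div_nonneg (sub_nonneg.mpr ((le_max_right _ _).trans hp.2.1)) ha.le

lemma integrableOn_lifRegion_exp {a : ℝ} (ha : 0 < a) (d : ℝ) :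
    IntegrableOn (fun p : ℝ × ℝ => exp ((p.2 ^ 2 - p.1 ^ 2) / (2 * a) - d * ((p.2 - p.1) / a)))
      (lifRegion VR VF) (volume.prod volume) := by
  set C := (|VR| + |VF| + |d|) ^ 2
  have hg : Integrable (fun p : ℝ × ℝ => exp (C / (2 * a)) * exp (-(1 / (2 * a)) * (p.1 - d) ^ 2))
      ((volume.prod volume).restrict (univ ×ˢ Icc VR VF)) := by
    rw [← Measure.prod_restrict, Measure.restrict_univ]
    have : IsFiniteMeasure (volume.restrict (Icc VR VF)) :=
      isFiniteMeasure_restrict.mpr measure_Icc_lt_top.ne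
    exact (((integrable_exp_neg_mul_sq (by positivity)).comp_sub_right d).const_mul _).comp_fst _
  refine IntegrableOn.mono_set ?_ (lifRegion_subset_prod VR VF)
  refine hg.mono' (Continuous.aestronglyMeasurable (by fun_prop)) ?_
  filter_upwards [ae_restrict_mem (MeasurableSet.univ.prod measurableSet_Icc)] with p hp
  have hC : (p.2 - d) ^ 2 ≤ C := by
    have hp2 : |p.2| ≤ |VR| + |VF| := abs_le.mpr
      ⟨by linarith [neg_abs_le VR, abs_nonneg VF, hp.2.1],
        by linarith [le_abs_self VF, abs_nonneg VR, hp.2.2]⟩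
    rw [← sq_abs]
    exact pow_le_pow_left₀ (abs_nonneg _) ((abs_sub _ _).trans (by linarith)) 2
  rw [norm_of_nonneg (exp_pos _).le, ← exp_add, exp_le_exp]
  calc (p.2 ^ 2 - p.1 ^ 2) / (2 * a) - d * ((p.2 - p.1) / a)
      = ((p.2 - d) ^ 2 - (p.1 - d) ^ 2) / (2 * a) := by field_simp; ring
    _ ≤ (C - (p.1 - d) ^ 2) / (2 * a) := by gcongr
    _ = C / (2 * a) + -(1 / (2 * a)) * (p.1 - d) ^ 2 := by field_simp; ring

end lifRegion

theorem stmt6_general (a VR VF : ℝ) (ha : 0 < a)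
    (I : ℝ → ℝ)
    (σ : ℝ → ℝ)
    (Nbar σ' : ℝ) (hσdiff : HasDerivAt σ σ' Nbar)
    (w : ℝ) :
    HasDerivAt (fun N => Zfun a VR VF I σ w N)
      (-w * σ' *
        ∫ v in Set.Iic VF, ∫ v' in Set.Icc (max VR v) VF,
          ((v' - v) / a) *
            Real.exp ((v' - v) * (v' + v - 2 * I w - 2 * w * σ Nbar) / (2 * a)))
      Nbar := by
  have hexp (N v v' : ℝ) : (v' - v) * (v' + v - 2 * I w - 2 * w * σ N) / (2 * a)
      = (v' ^ 2 - v ^ 2) / (2 * a) - (I w + w * σ N) * ((v' - v) / a) := by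
    field_simp; ring
  have hint := integrableOn_lifRegion_exp VR VF ha
  have h0 := ae_restrict_lifRegion_div_nonneg VR VF ha
  have hhm : AEStronglyMeasurable (fun p : ℝ × ℝ => (p.2 - p.1) / a)
      ((volume.prod volume).restrict (lifRegion VR VF)) :=
    Continuous.aestronglyMeasurable (by fun_prop)
  have hZ (N : ℝ) : Zfun a VR VF I σ w N = ∫ p in lifRegion VR VF,
      exp ((p.2 ^ 2 - p.1 ^ 2) / (2 * a) - (I w + w * σ N) * ((p.2 - p.1) / a))
        ∂(volume.prod volume) := by
    rw [← integral_integral_eq_setIntegral_lifRegion VR VF (hint _)]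
    simp only [Zfun, hexp]
  simp only [hZ, hexp]
  rw [integral_integral_eq_setIntegral_lifRegion VR VF (integrable_mul_exp_sub_mul hhm h0 hint _)]
  refine ((hasDerivAt_integral_exp_sub_mul hhm h0 hint _).comp Nbar
    ((hσdiff.const_mul w).const_add (I w))).congr_deriv ?_
  rw [integral_neg]
  ring

/-- Differentiability of `N ↦ Z_{N,I}(w)` and the explicit formula for its derivative. -/
theorem stmt6 (a VR VF : ℝ) (ha : 0 < a) (hV : VR < VF)
    (I : ℝ → ℝ) (hImeas : Measurable I) (nI : ℝ) (hI : ∀ x, |I x| ≤ nI)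
    (σ : ℝ → ℝ) (hσ0 : ∀ N, 0 ≤ N → 0 ≤ σ N)
    (Nbar σ' : ℝ) (hNbar : 0 < Nbar) (hσdiff : HasDerivAt σ σ' Nbar)
    (w : ℝ) :
    HasDerivAt (fun N => Zfun a VR VF I σ w N)
      (-w * σ' *
        ∫ v in Set.Iic VF, ∫ v' in Set.Icc (max VR v) VF,
          ((v' - v) / a) *
            Real.exp ((v' - v) * (v' + v - 2 * I w - 2 * w * σ Nbar) / (2 * a)))
      Nbar :=
  stmt6_general a VR VF ha I σ Nbar σ' hσdiff w
end

section
/- Existence of a stationary state (Theorem 3.1, existence part): assume σ is of class C² with σ' ≥ 0 and σ_M = sup σ < ∞, let I : ℝ → ℝ be bounded measurable, and let H : ℝ → [0,∞) be measurable with ∫_ℝ H(w) dw = 1 and ∫_0^∞ w² H(w) dw < ∞. Then there exists N̄ > 0 such that a ∫_ℝ H(w) / Z_{N̄,I}(w) dw = N̄. -/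
/-!
The partition function depends on `w` and `N̄` only through the drift
`c = 2 I(w) + 2 w σ(N̄)`. As a function of `c` it is continuous and positive, and `1/Z` grows at
most linearly in `c⁺`: near the diagonal `v' = v`, on a strip of width `≍ 1/c⁺`, the exponent is
at least `-1`. For `N̄ ≥ 0` we have `σ(N̄) ∈ [0, σM]`, hence `c⁺ ≤ 2‖I‖ + 2 σM w⁺`, so `H/Z` is
dominated by an integrable function (the first moment of `H` on `w > 0` is finite). Thus
`N̄ ↦ a ∫ H/Z` is continuous, positive and bounded on `[0, ∞)`, and the intermediate value
theorem yields a positive fixed point.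
-/

open MeasureTheory Real Set Filter

noncomputable def partitionFnSlice (a VR VF c v : ℝ) : ℝ :=
  ∫ v' in Icc (max VR v) VF, exp ((v' - v) * (v' + v - c) / (2 * a))

noncomputable def partitionFn (a VR VF c : ℝ) : ℝ :=
  ∫ v in Iic VF, partitionFnSlice a VR VF c v

theorem Zfun_eq_partitionFn (a VR VF : ℝ) (I σ : ℝ → ℝ) (w N : ℝ) :
    Zfun a VR VF I σ w N = partitionFn a VR VF (2 * I w + 2 * w * σ N) := by
  simp only [Zfun, partitionFn, partitionFnSlice, sub_sub]

theorem integrable_exp_neg_mul_sq_add_mul_add {b : ℝ} (hb : 0 < b) (β γ : ℝ) :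
    Integrable fun x : ℝ => exp (-b * x ^ 2 + β * x + γ) := by
  have hsq : ∀ x : ℝ, exp (-b * x ^ 2 + β * x + γ) =
      exp (γ + β ^ 2 / (4 * b)) * exp (-b * (x + -(β / (2 * b))) ^ 2) := fun x => by
    rw [← exp_add]; congr 1; field_simp; ring
  simp_rw [hsq]
  exact ((integrable_exp_neg_mul_sq hb).comp_add_right _).const_mul _

section PartitionFn

variable {a VR VF : ℝ}

theorem partitionFnSlice_nonneg (c v : ℝ) : 0 ≤ partitionFnSlice a VR VF c v :=
  setIntegral_nonneg measurableSet_Icc fun _ _ => (exp_pos _).le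

theorem stronglyMeasurable_partitionFnSlice (c : ℝ) :
    StronglyMeasurable (partitionFnSlice a VR VF c) := by
  have hS : MeasurableSet {p : ℝ × ℝ | p.2 ∈ Icc (max VR p.1) VF} :=
    (measurableSet_le (measurable_const.max measurable_fst) measurable_snd).inter
      (measurableSet_le measurable_snd measurable_const)
  have hF := ((Continuous.stronglyMeasurable (by fun_prop :
    Continuous fun p : ℝ × ℝ => exp ((p.2 - p.1) * (p.2 + p.1 - c) / (2 * a)))).indicator
    hS).integral_prod_right' (ν := volume)
  convert hF using 2 with v
  rw [partitionFnSlice, ← integral_indicator measurableSet_Icc]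
  rfl

theorem partitionFnSlice_le (ha : 0 < a) (hV : VR ≤ VF) {c d v : ℝ} (hcd : |c| ≤ d)
    (hv : v ≤ VF) :
    partitionFnSlice a VR VF c v ≤
      (VF - VR) * exp (-(2 * a)⁻¹ * v ^ 2 + -(d / (2 * a)) * v +
        (max |VR| |VF| ^ 2 + d * VF) / (2 * a)) := by
  set C := exp (-(2 * a)⁻¹ * v ^ 2 + -(d / (2 * a)) * v +
    (max |VR| |VF| ^ 2 + d * VF) / (2 * a))
  have hbound : ∀ v' ∈ Icc (max VR v) VF, ‖exp ((v' - v) * (v' + v - c) / (2 * a))‖ ≤ C := by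
    rintro v' ⟨hv₁, hv'⟩
    rw [norm_of_nonneg (exp_pos _).le, exp_le_exp]
    have hsq : v' ^ 2 ≤ max |VR| |VF| ^ 2 :=
      sq_le_sq' (by linarith [le_max_left |VR| |VF|, neg_abs_le VR, le_max_left VR v])
        (hv'.trans ((le_abs_self VF).trans (le_max_right _ _)))
    have hvv' : v ≤ v' := (le_max_right _ _).trans hv₁
    have hc := abs_le.1 hcd
    have key : (v' - v) * (v' + v - c) ≤ max |VR| |VF| ^ 2 - v ^ 2 + d * (VF - v) := by
      nlinarith [mul_nonneg (by linarith : 0 ≤ d + c) (sub_nonneg.2 hvv'),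
        mul_nonneg (by linarith : 0 ≤ d) (sub_nonneg.2 hv')]
    calc (v' - v) * (v' + v - c) / (2 * a)
        ≤ (max |VR| |VF| ^ 2 - v ^ 2 + d * (VF - v)) / (2 * a) := by gcongr
      _ = _ := by field_simp; ring
  calc partitionFnSlice a VR VF c v
      ≤ C * volume.real (Icc (max VR v) VF) :=
        (le_abs_self _).trans (norm_setIntegral_le_of_norm_le_const measure_Icc_lt_top hbound)
    _ ≤ C * (VF - VR) := by
        rw [Real.volume_real_Icc_of_le (max_le hV hv)]
        gcongr
        exact le_max_left _ _
    _ = _ := mul_comm _ _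

theorem integrableOn_partitionFnSlice (ha : 0 < a) (hV : VR ≤ VF) (c : ℝ) :
    IntegrableOn (partitionFnSlice a VR VF c) (Iic VF) := by
  refine Integrable.mono'
    (((integrable_exp_neg_mul_sq_add_mul_add (by positivity : 0 < (2 * a)⁻¹) (-(|c| / (2 * a)))
      ((max |VR| |VF| ^ 2 + |c| * VF) / (2 * a))).const_mul (VF - VR)).integrableOn)
    (stronglyMeasurable_partitionFnSlice c).aestronglyMeasurable.restrict ?_
  refine (ae_restrict_iff' measurableSet_Iic).2 (Eventually.of_forall fun v hv => ?_)
  rw [norm_of_nonneg (partitionFnSlice_nonneg c v)]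
  exact partitionFnSlice_le ha hV le_rfl hv

theorem continuous_partitionFn (ha : 0 < a) (hV : VR ≤ VF) :
    Continuous (partitionFn a VR VF) := by
  refine continuous_iff_continuousAt.2 fun c₀ => continuousAt_of_dominated
    (Eventually.of_forall fun c =>
      (stronglyMeasurable_partitionFnSlice c).aestronglyMeasurable.restrict) ?_
    (((integrable_exp_neg_mul_sq_add_mul_add (by positivity : 0 < (2 * a)⁻¹)
      (-((|c₀| + 1) / (2 * a))) ((max |VR| |VF| ^ 2 + (|c₀| + 1) * VF) / (2 * a))).const_mul
      (VF - VR)).integrableOn) ?_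
  · have hnear : ∀ᶠ c in nhds c₀, |c| ≤ |c₀| + 1 := by
      filter_upwards [Metric.closedBall_mem_nhds c₀ one_pos] with c hc
      have := abs_sub_abs_le_abs_sub c c₀
      rw [Metric.mem_closedBall, Real.dist_eq] at hc
      linarith
    filter_upwards [hnear] with c hc
    refine (ae_restrict_iff' measurableSet_Iic).2 (Eventually.of_forall fun v hv => ?_)
    rw [norm_of_nonneg (partitionFnSlice_nonneg c v)]
    exact partitionFnSlice_le ha hV hc hv
  · exact Eventually.of_forall fun v => (continuous_parametric_integral_of_continuous
      (by fun_prop) isCompact_Icc).continuousAt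

end PartitionFn

section LowerBound

variable {a VR VF : ℝ}

/-- On `[v, v + s]` the exponent is at least `-1`. -/
theorem exp_neg_one_mul_le_partitionFnSlice (ha : 0 < a) {c s v : ℝ} (hs : 0 ≤ s)
    (hsc : s * (2 * |VR| + max c 0) ≤ 2 * a) (hv : v ∈ Icc VR (VF - s)) :
    exp (-1) * s ≤ partitionFnSlice a VR VF c v := by
  obtain ⟨hVRv, hvs⟩ := hv
  have hsub : Icc v (v + s) ⊆ Icc (max VR v) VF := by
    rw [max_eq_right hVRv]; exact Icc_subset_Icc le_rfl (by linarith)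
  have hint : IntegrableOn (fun v' => exp ((v' - v) * (v' + v - c) / (2 * a)))
      (Icc (max VR v) VF) := (by fun_prop : Continuous _).integrableOn_Icc
  have hexp : ∀ v' ∈ Icc v (v + s), exp (-1) ≤ exp ((v' - v) * (v' + v - c) / (2 * a)) := by
    rintro v' ⟨hv', hv's⟩
    rw [exp_le_exp, le_div_iff₀ (by positivity)]
    have hM : -(2 * |VR| + max c 0) ≤ v' + v - c := by
      linarith [neg_abs_le VR, le_max_left c 0]
    nlinarith [mul_le_mul_of_nonneg_left hM (sub_nonneg.2 hv'),
      mul_le_mul_of_nonneg_right (by linarith : v' - v ≤ s)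
        (by positivity : 0 ≤ 2 * |VR| + max c 0)]
  calc exp (-1) * s = exp (-1) * volume.real (Icc v (v + s)) := by
        rw [volume_real_Icc_of_le (by linarith), add_sub_cancel_left]
    _ ≤ ∫ v' in Icc v (v + s), exp ((v' - v) * (v' + v - c) / (2 * a)) :=
        setIntegral_ge_of_const_le_real measurableSet_Icc measure_Icc_lt_top.ne hexp
          (hint.mono_set hsub)
    _ ≤ partitionFnSlice a VR VF c v :=
        setIntegral_mono_set hint (Eventually.of_forall fun _ => (exp_pos _).le)
          hsub.eventuallyLE

theorem exp_neg_one_mul_le_partitionFn (ha : 0 < a) {c s : ℝ} (hs : 0 ≤ s) (hsV : s ≤ VF - VR)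
    (hsc : s * (2 * |VR| + max c 0) ≤ 2 * a) :
    exp (-1) * s * (VF - VR - s) ≤ partitionFn a VR VF c := by
  have hint := integrableOn_partitionFnSlice ha (by linarith : VR ≤ VF) c
  have hsub : Icc VR (VF - s) ⊆ Iic VF := fun v hv => (hv.2.trans (by linarith) : v ≤ VF)
  calc exp (-1) * s * (VF - VR - s) = exp (-1) * s * volume.real (Icc VR (VF - s)) := by
        rw [volume_real_Icc_of_le (by linarith)]; ring
    _ ≤ ∫ v in Icc VR (VF - s), partitionFnSlice a VR VF c v :=
        setIntegral_ge_of_const_le_real measurableSet_Icc measure_Icc_lt_top.ne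
          (fun _ hv => exp_neg_one_mul_le_partitionFnSlice ha hs hsc hv) (hint.mono_set hsub)
    _ ≤ partitionFn a VR VF c :=
        setIntegral_mono_set hint (Eventually.of_forall (partitionFnSlice_nonneg c))
          hsub.eventuallyLE

/-- `exp_neg_one_mul_le_partitionFn` with `s⁻¹ = t⁻¹ + (2|VR| + c⁺)/(2a)`, `t = (VF - VR)/2`. -/
theorem le_partitionFn (ha : 0 < a) (hV : VR < VF) (c : ℝ) :
    exp (-1) * ((VF - VR) / 2) / (((VF - VR) / 2)⁻¹ + (2 * |VR| + max c 0) / (2 * a)) ≤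
      partitionFn a VR VF c := by
  set t := (VF - VR) / 2
  set M := 2 * |VR| + max c 0
  have htV : 2 * t = VF - VR := by simp only [t]; ring
  have ht : 0 < t := by linarith
  have hM : 0 ≤ M := by positivity
  set s := (t⁻¹ + M / (2 * a))⁻¹
  have hs_inv : s⁻¹ = t⁻¹ + M / (2 * a) := inv_inv _
  have hs : 0 < s := by positivity
  have hst : s ≤ t := inv_le_of_inv_le₀ ht (by linarith [(by positivity : 0 ≤ M / (2 * a))])
  have hsM : s * M ≤ 2 * a := by
    have hMs : M / (2 * a) ≤ s⁻¹ := by linarith [inv_pos.2 ht]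
    calc s * M = s * (2 * a) * (M / (2 * a)) := by field_simp
      _ ≤ s * (2 * a) * s⁻¹ := by gcongr
      _ = 2 * a := by field_simp
  rw [← hs_inv]
  calc exp (-1) * t / s⁻¹ = exp (-1) * s * t := by rw [div_inv_eq_mul]; ring
    _ ≤ exp (-1) * s * (VF - VR - s) := by gcongr; linarith
    _ ≤ partitionFn a VR VF c := exp_neg_one_mul_le_partitionFn ha hs.le (by linarith) hsM

theorem partitionFn_pos (ha : 0 < a) (hV : VR < VF) (c : ℝ) : 0 < partitionFn a VR VF c :=
  lt_of_lt_of_le (by have : 0 < VF - VR := sub_pos.2 hV; positivity) (le_partitionFn ha hV c)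

theorem inv_partitionFn_le (ha : 0 < a) (hV : VR < VF) (c : ℝ) :
    (partitionFn a VR VF c)⁻¹ ≤
      exp 1 / ((VF - VR) / 2) * (((VF - VR) / 2)⁻¹ + (2 * |VR| + max c 0) / (2 * a)) := by
  have : 0 < VF - VR := sub_pos.2 hV
  calc (partitionFn a VR VF c)⁻¹
      ≤ (exp (-1) * ((VF - VR) / 2) / (((VF - VR) / 2)⁻¹ + (2 * |VR| + max c 0) / (2 * a)))⁻¹ :=
        inv_anti₀ (by positivity) (le_partitionFn ha hV c)
    _ = _ := by rw [exp_neg]; field_simp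

end LowerBound

theorem integral_div_pos {α : Type*} [MeasurableSpace α] {μ : Measure α} {f g : α → ℝ}
    (hf : 0 ≤ f) (hg : ∀ x, 0 < g x) (hfg : Integrable (fun x => f x / g x) μ)
    (hf0 : ∫ x, f x ∂μ ≠ 0) : 0 < ∫ x, f x / g x ∂μ := by
  have hnonneg : 0 ≤ fun x => f x / g x := fun x => div_nonneg (hf x) (hg x).le
  refine (integral_nonneg hnonneg).lt_of_ne fun h => hf0 (integral_eq_zero_of_ae ?_)
  filter_upwards [(integral_eq_zero_iff_of_nonneg hnonneg hfg).1 h.symm] with x hx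
  simpa [(hg x).ne'] using hx

theorem integrable_max_mul_of_integrableOn_sq_mul {H : ℝ → ℝ} (hH : Integrable H)
    (hH2 : IntegrableOn (fun w => w ^ 2 * H w) (Ioi 0)) :
    Integrable fun w => max w 0 * H w := by
  have hind : (fun w => max w 0 * H w) = (Ioi 0).indicator fun w => w * H w := by
    ext w
    rcases le_or_gt w 0 with hw | hw
    · rw [max_eq_right hw, zero_mul, indicator_of_notMem (notMem_Ioi.2 hw)]
    · simp [max_eq_left hw.le, indicator_of_mem (mem_Ioi.2 hw)]
  rw [hind, integrable_indicator_iff measurableSet_Ioi]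
  refine Integrable.mono' (hH.integrableOn.norm.add hH2.norm)
    (continuous_id.aestronglyMeasurable.mul hH.aestronglyMeasurable).restrict
    (Eventually.of_forall fun w => ?_)
  simp only [norm_mul, Real.norm_eq_abs, abs_pow, sq_abs, Pi.add_apply]
  nlinarith [abs_nonneg (H w), sq_nonneg (|w| - 1), sq_abs w]

theorem exists_pos_eq_of_continuousOn_of_le {f : ℝ → ℝ} (hf : ContinuousOn f (Ici 0))
    (hf0 : 0 < f 0) {M : ℝ} (hM : ∀ x, 0 ≤ x → f x ≤ M) : ∃ x > 0, f x = x := by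
  have hM0 : 0 ≤ M := hf0.le.trans (hM 0 le_rfl)
  obtain ⟨x, hx, hfx⟩ := intermediate_value_Icc' hM0
    ((hf.mono Icc_subset_Ici_self).sub continuousOn_id)
    (⟨by linarith [hM M hM0], by simpa using hf0.le⟩ : (0 : ℝ) ∈ Icc (f M - M) (f 0 - 0))
  have hfx : f x = x := sub_eq_zero.1 hfx
  refine ⟨x, hx.1.lt_of_ne fun h => ?_, hfx⟩
  subst h
  linarith

theorem max_two_mul_add_le {x nI w s σM : ℝ} (hx : |x| ≤ nI) (hs : s ∈ Icc 0 σM) :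
    max (2 * x + 2 * w * s) 0 ≤ 2 * nI + 2 * σM * max w 0 := by
  have hws : w * s ≤ σM * max w 0 := by
    rcases le_or_gt 0 w with hw | hw
    · rw [max_eq_left hw, mul_comm σM]; exact mul_le_mul_of_nonneg_left hs.2 hw
    · rw [max_eq_right hw.le, mul_zero]; exact mul_nonpos_of_nonpos_of_nonneg hw.le hs.1
  have hσM : 0 ≤ σM * max w 0 := mul_nonneg (hs.1.trans hs.2) (le_max_right w 0)
  exact max_le (by linarith [(abs_le.1 hx).2]) (by linarith [(abs_nonneg x).trans hx])

section RateIntegrand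

variable {a VR VF : ℝ} {I H : ℝ → ℝ}

theorem exists_integrable_bound_div_partitionFn (ha : 0 < a) (hV : VR < VF) {nI : ℝ}
    (hI : ∀ x, |I x| ≤ nI) (σM : ℝ) (hH0 : ∀ w, 0 ≤ H w) (hH : Integrable H)
    (hH2 : IntegrableOn (fun w => w ^ 2 * H w) (Ioi 0)) :
    ∃ G : ℝ → ℝ, Integrable G ∧
      ∀ s ∈ Icc 0 σM, ∀ w, ‖H w / partitionFn a VR VF (2 * I w + 2 * w * s)‖ ≤ G w := by
  set t := (VF - VR) / 2
  refine ⟨fun w => H w * (exp 1 / t * (t⁻¹ + (2 * |VR| + (2 * nI + 2 * σM * max w 0)) / (2 * a))),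
    ?_, fun s hs w => ?_⟩
  · have hG : (fun w => H w * (exp 1 / t * (t⁻¹ + (2 * |VR| + (2 * nI + 2 * σM * max w 0)) /
        (2 * a)))) = fun w => exp 1 / t * (t⁻¹ + (2 * |VR| + 2 * nI) / (2 * a)) * H w +
          exp 1 / t * (σM / a) * (max w 0 * H w) := by
      ext w; ring
    rw [hG]
    exact (hH.const_mul _).add ((integrable_max_mul_of_integrableOn_sq_mul hH hH2).const_mul _)
  · have ht : 0 < t := by simp only [t]; linarith
    rw [norm_of_nonneg (div_nonneg (hH0 w) (partitionFn_pos ha hV _).le), div_eq_mul_inv]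
    refine mul_le_mul_of_nonneg_left ((inv_partitionFn_le ha hV _).trans ?_) (hH0 w)
    gcongr
    exact max_two_mul_add_le (hI w) hs

theorem aestronglyMeasurable_div_partitionFn (ha : 0 < a) (hV : VR < VF) (hImeas : Measurable I)
    (hH : AEStronglyMeasurable H) (s : ℝ) :
    AEStronglyMeasurable fun w => H w / partitionFn a VR VF (2 * I w + 2 * w * s) :=
  hH.mul ((continuous_partitionFn ha hV.le).measurable.comp
    (by fun_prop : Measurable fun w => 2 * I w + 2 * w * s)).inv.aestronglyMeasurable

end RateIntegrand

theorem stmt10_general (a VR VF : ℝ) (ha : 0 < a) (hV : VR < VF)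
    (σ : ℝ → ℝ) (hσC2 : ContDiff ℝ 2 σ) (hσ0 : ∀ N, 0 ≤ N → 0 ≤ σ N)
    (σM : ℝ) (hσM : ∀ N, 0 ≤ N → σ N ≤ σM)
    (I : ℝ → ℝ) (hImeas : Measurable I) (nI : ℝ) (hI : ∀ x, |I x| ≤ nI)
    (H : ℝ → ℝ) (hH0 : ∀ w, 0 ≤ H w)
    (hHint : Integrable H) (hH1 : (∫ w, H w) = 1)
    (hH2 : IntegrableOn (fun w => w ^ 2 * H w) (Set.Ioi 0)) :
    ∃ N > 0, a * (∫ w, H w / Zfun a VR VF I σ w N) = N := by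
  obtain ⟨G, hGint, hG⟩ := exists_integrable_bound_div_partitionFn ha hV hI σM hH0 hHint hH2
  have hmeas := aestronglyMeasurable_div_partitionFn ha hV hImeas hHint.aestronglyMeasurable
  have hint : ∀ s ∈ Icc 0 σM,
      Integrable fun w => H w / partitionFn a VR VF (2 * I w + 2 * w * s) :=
    fun s hs => hGint.mono' (hmeas s) (Eventually.of_forall (hG s hs))
  have hcont : ContinuousOn (fun s => ∫ w, H w / partitionFn a VR VF (2 * I w + 2 * w * s))
      (Icc 0 σM) :=
    continuousOn_of_dominated (fun s _ => hmeas s)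
      (fun s hs => Eventually.of_forall (hG s hs)) hGint
      (Eventually.of_forall fun w => (continuous_const.div
        ((continuous_partitionFn ha hV.le).comp (by fun_prop))
        fun _ => (partitionFn_pos ha hV _).ne').continuousOn)
  have hσ : MapsTo σ (Ici 0) (Icc 0 σM) := fun N hN => ⟨hσ0 N hN, hσM N hN⟩
  obtain ⟨N, hN, hfix⟩ := exists_pos_eq_of_continuousOn_of_le
    (continuousOn_const.mul (hcont.comp hσC2.continuous.continuousOn hσ))
    (mul_pos ha (integral_div_pos hH0 (fun w => partitionFn_pos ha hV _)
      (hint _ (hσ (mem_Ici.2 le_rfl))) (by rw [hH1]; exact one_ne_zero)))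
    (fun N hN => mul_le_mul_of_nonneg_left
      (integral_mono (hint _ (hσ hN)) hGint fun w => (le_norm_self _).trans (hG _ (hσ hN) w))
      ha.le)
  exact ⟨N, hN, by simpa only [Zfun_eq_partitionFn, Pi.mul_apply, Function.comp_apply] using hfix⟩

/-- Existence of a stationary state (Theorem 3.1, existence part): there is a total
activity `N̄ > 0` solving the fixed point equation `a ∫ H(w)/Z_{N̄,I}(w) dw = N̄`. -/
theorem stmt10 (a VR VF : ℝ) (ha : 0 < a) (hV : VR < VF)
    (σ : ℝ → ℝ) (hσC2 : ContDiff ℝ 2 σ) (hσ0 : ∀ N, 0 ≤ N → 0 ≤ σ N)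
    (hσ' : ∀ N, 0 ≤ N → 0 ≤ deriv σ N)
    (σM : ℝ) (hσM : ∀ N, 0 ≤ N → σ N ≤ σM)
    (I : ℝ → ℝ) (hImeas : Measurable I) (nI : ℝ) (hI : ∀ x, |I x| ≤ nI)
    (H : ℝ → ℝ) (hHmeas : Measurable H) (hH0 : ∀ w, 0 ≤ H w)
    (hHint : Integrable H) (hH1 : (∫ w, H w) = 1)
    (hH2 : IntegrableOn (fun w => w ^ 2 * H w) (Set.Ioi 0)) :
    ∃ N > 0, a * (∫ w, H w / Zfun a VR VF I σ w N) = N :=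
  stmt10_general a VR VF ha hV σ hσC2 hσ0 σM hσM I hImeas nI hI H hH0 hHint hH1 hH2
end

section
/- Existence, uniqueness and linear bounds for the support function φ of the learned weight distribution: let K : (−∞,0) → ℝ be measurable with K(w) < 0 for all w < 0 and K_m ≤ |K(w)| ≤ K_M for almost every w < 0, where 0 < K_m ≤ K_M. Then for every N ≥ 0 there exists a unique φ(N) ≥ 0 such that N² = ∫_{−φ(N)}^{0} (w/K(w)) dw, and this φ(N) satisfies √(2 K_m) · N ≤ φ(N) ≤ √(2 K_M) · N. -/
open MeasureTheory Real Set Filter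

/-!
Write `G ψ = ∫_{-ψ}^0 w / K w dw`. The bounds on `|K|` squeeze the integrand between
`-w / K_M` and `-w / K_m`, so for `0 ≤ y ≤ x` the increment `G x - G y` lies between
`(x² - y²) / (2 K_M)` and `(x² - y²) / (2 K_m)`. Hence `G` is continuous and strictly increasing
on `[0, ∞)` with `G 0 = 0` and `G ψ ≥ ψ² / (2 K_M)`, so it takes the value `N²` exactly once,
and the quadratic bounds on `G φ(N) = N²` give the linear bounds on `φ(N)`.
-/

lemma div_mem_Icc_of_nonpos {w k Km KM : ℝ} (hw : w ≤ 0) (hKm : 0 < Km)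
    (hk : w < 0 → k < 0) (hk_abs : w < 0 → |k| ∈ Icc Km KM) :
    w / k ∈ Icc (KM⁻¹ * -w) (Km⁻¹ * -w) := by
  rcases hw.lt_or_eq with hw | rfl
  · obtain ⟨hlo, hhi⟩ := hk_abs hw
    rw [abs_of_neg (hk hw)] at hlo hhi
    rw [← neg_div_neg_eq, inv_mul_eq_div, inv_mul_eq_div]
    exact ⟨div_le_div_of_nonneg_left (by linarith) (by linarith) hhi,
      div_le_div_of_nonneg_left (by linarith) hKm hlo⟩
  · simp

section QuadraticIncrements

variable {G : ℝ → ℝ} {m M : ℝ}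

lemma strictMonoOn_of_sq_sub_le_sub (hm : 0 < m)
    (hG : ∀ x y, 0 ≤ y → y ≤ x → m * (x ^ 2 - y ^ 2) ≤ G x - G y) :
    StrictMonoOn G (Ici 0) := by
  intro y hy x _ hyx
  have := hG x y hy hyx.le
  nlinarith [mul_pos hm (by nlinarith [mem_Ici.mp hy] : 0 < x ^ 2 - y ^ 2)]

lemma lipschitzOnWith_Icc_of_sub_le_sq_sub (hM : 0 ≤ M) (hmono : MonotoneOn G (Ici 0))
    (hG : ∀ x y, 0 ≤ y → y ≤ x → G x - G y ≤ M * (x ^ 2 - y ^ 2)) {T : ℝ} (hT : 0 ≤ T) :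
    LipschitzOnWith (Real.toNNReal (2 * M * T)) G (Icc 0 T) := by
  have key : ∀ x ∈ Icc 0 T, ∀ y ∈ Icc 0 T, y ≤ x → dist (G x) (G y) ≤ 2 * M * T * dist x y := by
    intro x hx y hy hyx
    have hGyx : G y ≤ G x := hmono hy.1 hx.1 hyx
    rw [dist_eq, dist_eq, abs_of_nonneg (by linarith), abs_of_nonneg (by linarith)]
    calc G x - G y ≤ M * ((x + y) * (x - y)) := by linarith [hG x y hy.1 hyx]
      _ ≤ M * (2 * T * (x - y)) := by
        gcongr
        linarith [hx.2, hy.2]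
      _ = 2 * M * T * (x - y) := by ring
  rw [lipschitzOnWith_iff_dist_le_mul]
  intro x hx y hy
  rw [Real.coe_toNNReal _ (by positivity)]
  rcases le_total y x with hyx | hxy
  · exact key x hx y hy hyx
  · rw [dist_comm (G x), dist_comm x]
    exact key y hy x hx hxy

theorem existsUnique_eq_of_sq_increment_bounds (hG0 : G 0 = 0) (hm : 0 < m)
    (hG : ∀ x y, 0 ≤ y → y ≤ x →
      m * (x ^ 2 - y ^ 2) ≤ G x - G y ∧ G x - G y ≤ M * (x ^ 2 - y ^ 2))
    {c : ℝ} (hc : 0 ≤ c) :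
    ∃ φ, (0 ≤ φ ∧ G φ = c) ∧ (∀ ψ, 0 ≤ ψ → G ψ = c → ψ = φ) ∧
      m * φ ^ 2 ≤ c ∧ c ≤ M * φ ^ 2 := by
  have hmono := strictMonoOn_of_sq_sub_le_sub hm fun x y hy hyx => (hG x y hy hyx).1
  have hM : 0 ≤ M := by nlinarith [hG 1 0 le_rfl zero_le_one]
  set T := √(c / m)
  have hT : 0 ≤ T := sqrt_nonneg _
  have hGT : c ≤ G T := by
    have := (hG T 0 le_rfl hT).1
    rw [sq_sqrt (div_nonneg hc hm.le), hG0] at this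
    field_simp at this
    linarith
  have hcont : ContinuousOn G (Icc 0 T) :=
    (lipschitzOnWith_Icc_of_sub_le_sq_sub hM hmono.monotoneOn
      (fun x y hy hyx => (hG x y hy hyx).2) hT).continuousOn
  obtain ⟨φ, hφ, hGφ⟩ := intermediate_value_Icc hT hcont ⟨hG0.symm ▸ hc, hGT⟩
  refine ⟨φ, ⟨hφ.1, hGφ⟩,
    fun ψ hψ hGψ => hmono.injOn (mem_Ici.mpr hψ) (mem_Ici.mpr hφ.1) (hGψ.trans hGφ.symm), ?_⟩
  simpa [hG0, hGφ] using hG φ 0 le_rfl hφ.1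

end QuadraticIncrements

section IntegralOfLinearlyBounded

variable {f : ℝ → ℝ} {m M : ℝ}

lemma intervalIntegrable_of_mem_Icc_mul_neg (hf_meas : AEStronglyMeasurable f)
    (hf : ∀ᵐ w, w ≤ 0 → f w ∈ Icc (m * -w) (M * -w)) {a b : ℝ} (ha : a ≤ 0) (hb : b ≤ 0) :
    IntervalIntegrable f volume a b := by
  refine IntervalIntegrable.mono_fun' (g := fun w => max |m * -w| |M * -w|)
    ((by fun_prop : Continuous fun w => max |m * -w| |M * -w|).intervalIntegrable a b)
    hf_meas.restrict ?_
  filter_upwards [ae_restrict_of_ae hf, ae_restrict_mem measurableSet_uIoc] with w hw hw_mem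
  have hw0 : w ≤ 0 := hw_mem.2.trans (max_le ha hb)
  exact abs_le_max_abs_abs (hw hw0).1 (hw hw0).2

lemma integral_mem_Icc_of_mem_Icc_mul_neg (hf_meas : AEStronglyMeasurable f)
    (hf : ∀ᵐ w, w ≤ 0 → f w ∈ Icc (m * -w) (M * -w)) {a b : ℝ} (hab : a ≤ b) (hb : b ≤ 0) :
    ∫ w in a..b, f w ∈ Icc (m / 2 * (a ^ 2 - b ^ 2)) (M / 2 * (a ^ 2 - b ^ 2)) := by
  have hlin : ∀ c : ℝ, ∫ w in a..b, c * -w = c / 2 * (a ^ 2 - b ^ 2) := fun c => by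
    simp only [mul_neg, intervalIntegral.integral_neg]
    rw [intervalIntegral.integral_const_mul, integral_id]
    ring
  have hf_int := intervalIntegrable_of_mem_Icc_mul_neg hf_meas hf (hab.trans hb) hb
  have hf_ae : ∀ᵐ w ∂volume.restrict (Icc a b), f w ∈ Icc (m * -w) (M * -w) := by
    filter_upwards [ae_restrict_of_ae hf, ae_restrict_mem measurableSet_Icc] with w hw hw_mem
    exact hw (hw_mem.2.trans hb)
  rw [← hlin m, ← hlin M]
  exact ⟨intervalIntegral.integral_mono_ae_restrict hab
      ((by fun_prop : Continuous fun w => m * -w).intervalIntegrable a b) hf_int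
      (hf_ae.mono fun _ h => h.1),
    intervalIntegral.integral_mono_ae_restrict hab hf_int
      ((by fun_prop : Continuous fun w => M * -w).intervalIntegrable a b)
      (hf_ae.mono fun _ h => h.2)⟩

lemma integral_neg_sub_integral_neg_mem_Icc (hf_meas : AEStronglyMeasurable f)
    (hf : ∀ᵐ w, w ≤ 0 → f w ∈ Icc (m * -w) (M * -w)) {x y : ℝ} (hy : 0 ≤ y) (hyx : y ≤ x) :
    (∫ w in (-x)..0, f w) - ∫ w in (-y)..0, f w ∈
      Icc (m / 2 * (x ^ 2 - y ^ 2)) (M / 2 * (x ^ 2 - y ^ 2)) := by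
  have hint : ∀ a ≤ 0, IntervalIntegrable f volume a 0 := fun a ha =>
    intervalIntegrable_of_mem_Icc_mul_neg hf_meas hf ha le_rfl
  rw [← intervalIntegral.integral_add_adjacent_intervals
    (intervalIntegrable_of_mem_Icc_mul_neg hf_meas hf (by linarith) (by linarith))
    (hint (-y) (by linarith)), add_sub_cancel_right]
  simpa only [neg_sq] using integral_mem_Icc_of_mem_Icc_mul_neg hf_meas hf (neg_le_neg hyx)
    (neg_nonpos.mpr hy)

end IntegralOfLinearlyBounded

/-- Existence, uniqueness and linear bounds for the support function `φ` of the
learned weight distribution: for every `N ≥ 0` there is a unique `φ(N) ≥ 0` with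
`N² = ∫_{−φ(N)}^0 w/K(w) dw`, and `√(2 K_m) N ≤ φ(N) ≤ √(2 K_M) N`. -/
theorem stmt16 (K : ℝ → ℝ) (hKmeas : Measurable K)
    (hKneg : ∀ w : ℝ, w < 0 → K w < 0)
    (Km KM : ℝ) (hKm : 0 < Km) (hKmM : Km ≤ KM)
    (hKbd : ∀ᵐ w : ℝ, w < 0 → Km ≤ |K w| ∧ |K w| ≤ KM) :
    ∀ N : ℝ, 0 ≤ N →
      ∃ φN : ℝ,
        (0 ≤ φN ∧ N ^ 2 = ∫ w in Set.Ioc (-φN) (0 : ℝ), w / K w) ∧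
        (∀ ψ : ℝ, 0 ≤ ψ → N ^ 2 = (∫ w in Set.Ioc (-ψ) (0 : ℝ), w / K w) → ψ = φN) ∧
        Real.sqrt (2 * Km) * N ≤ φN ∧ φN ≤ Real.sqrt (2 * KM) * N := by
  intro N hN
  have hKM : 0 < KM := hKm.trans_le hKmM
  have hf : ∀ᵐ w, w ≤ 0 → w / K w ∈ Icc (KM⁻¹ * -w) (Km⁻¹ * -w) := by
    filter_upwards [hKbd] with w hw hw0
    exact div_mem_Icc_of_nonpos hw0 hKm (hKneg w) hw
  obtain ⟨φ, ⟨hφ, hGφ⟩, huniq, hlow, hupp⟩ :=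
    existsUnique_eq_of_sq_increment_bounds (G := fun ψ => ∫ w in (-ψ)..0, w / K w)
      (by simp) (by positivity)
      (fun x y hy hyx => integral_neg_sub_integral_neg_mem_Icc
        (measurable_id.div hKmeas).aestronglyMeasurable hf hy hyx) (sq_nonneg N)
  have hset : ∀ ψ, 0 ≤ ψ → ∫ w in Ioc (-ψ) 0, w / K w = ∫ w in (-ψ)..0, w / K w :=
    fun ψ hψ => (intervalIntegral.integral_of_le (by linarith)).symm
  have hsqrt : ∀ a, 0 ≤ a → √a * N = √(a * N ^ 2) := fun a ha => by
    rw [sqrt_mul ha, sqrt_sq hN]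
  refine ⟨φ, ⟨hφ, by rw [hset φ hφ, hGφ]⟩,
    fun ψ hψ hN2 => huniq ψ hψ (by rw [← hset ψ hψ, hN2]), ?_, ?_⟩
  · rw [hsqrt _ (by positivity), sqrt_le_left hφ]
    field_simp at hupp
    linarith
  · rw [hsqrt _ (by positivity), le_sqrt hφ (by positivity)]
    field_simp at hlow
    linarith
end

section
/- Differentiability of the support function φ: let K : (−∞,0) → ℝ be continuous with K(w) < 0 for all w < 0 and K_m ≤ |K(w)| ≤ K_M for all w < 0, where 0 < K_m ≤ K_M, and for N ≥ 0 let φ(N) ≥ 0 be the unique number with N² = ∫_{−φ(N)}^{0} (w/K(w)) dw. Then φ is differentiable on (0,∞) with φ'(N) = −2 N K(−φ(N)) / φ(N), and there exist constants C₁, C₂ > 0 (depending only on K_m and K_M) such that C₁ ≤ φ'(N) ≤ C₂ for all N > 0. -/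
open MeasureTheory Real Set Filter Topology

/-!
Put `G x = ∫_{-x}^0 w / K w dw`, so that `G (φ N) = N²`. The bounds on `|K|` squeeze the
integrand between `-w / K_M` and `-w / K_m`, hence `G x` between `x² / (2 K_M)` and
`x² / (2 K_m)`. So `G` is strictly increasing on `[0, ∞)`, and `φ` is monotone there and maps
`(0, ∞)` onto itself, which makes it continuous. Since `G' x = -x / K (-x) > 0`, the inverse
function theorem applied to `√G ∘ φ = id` gives `φ' N = 2 N / G' (φ N)`, and `φ N ≍ N` bounds
it above and below.
-/

lemma div_mem_Icc_of_abs_mem_Icc {K : ℝ → ℝ} {Km KM : ℝ} (hKneg : ∀ w < 0, K w < 0)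
    (hKm : 0 < Km) (hKbd : ∀ w < 0, Km ≤ |K w| ∧ |K w| ≤ KM) {w : ℝ} (hw : w ≤ 0) :
    w / K w ∈ Icc (KM⁻¹ * -w) (Km⁻¹ * -w) := by
  rcases hw.lt_or_eq with hw | rfl
  · obtain ⟨hlo, hhi⟩ := hKbd w hw
    have hK : 0 < -K w := neg_pos.2 (hKneg w hw)
    rw [abs_of_neg (hKneg w hw)] at hlo hhi
    rw [← neg_div_neg_eq, div_eq_inv_mul]
    have hw' : 0 ≤ -w := by linarith
    exact ⟨by gcongr, by gcongr⟩
  · simp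

lemma continuousOn_Iic_zero_of_mem_Icc {f : ℝ → ℝ} {c₁ c₂ : ℝ} (hf : ContinuousOn f (Iio 0))
    (hbd : ∀ w ≤ 0, f w ∈ Icc (c₁ * -w) (c₂ * -w)) : ContinuousOn f (Iic 0) := by
  intro w hw
  rcases (mem_Iic.mp hw).lt_or_eq with hw | rfl
  · exact (hf.continuousAt (Iio_mem_nhds hw)).continuousWithinAt
  · have hf0 : f 0 = 0 := by simpa using hbd 0 le_rfl
    have hlim (c : ℝ) : Tendsto (fun w : ℝ => c * -w) (𝓝[Iic 0] 0) (𝓝 (f 0)) := by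
      rw [hf0]
      exact ((show Continuous fun w : ℝ => c * -w by fun_prop).tendsto' 0 0 (by simp)).mono_left
        nhdsWithin_le_nhds
    exact tendsto_of_tendsto_of_tendsto_of_le_of_le' (hlim c₁) (hlim c₂)
      (eventually_nhdsWithin_of_forall fun w hw => (hbd w hw).1)
      (eventually_nhdsWithin_of_forall fun w hw => (hbd w hw).2)

lemma integral_mul_neg_id (c a b : ℝ) :
    ∫ w in (-a)..(-b), c * -w = c * (a ^ 2 - b ^ 2) / 2 := by
  rw [intervalIntegral.integral_const_mul, intervalIntegral.integral_neg, integral_id]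
  ring

noncomputable def negIntegral (f : ℝ → ℝ) (x : ℝ) : ℝ := ∫ w in (-x)..0, f w

section NegIntegral

variable {f : ℝ → ℝ}

@[simp]
lemma negIntegral_zero : negIntegral f 0 = 0 := by
  simp [negIntegral]

lemma intervalIntegrable_of_continuousOn_Iic (hf : ContinuousOn f (Iic 0)) {a b : ℝ}
    (ha : a ≤ 0) (hb : b ≤ 0) : IntervalIntegrable f volume a b :=
  (hf.mono fun _ hx => hx.2.trans (max_le ha hb)).intervalIntegrable

lemma hasDerivAt_negIntegral (hf : ContinuousOn f (Iic 0)) {x : ℝ} (hx : 0 < x) :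
    HasDerivAt (negIntegral f) (f (-x)) x := by
  have hx' : -x ∈ Iio (0 : ℝ) := by simpa using hx
  have h := intervalIntegral.integral_hasDerivAt_left
    (intervalIntegrable_of_continuousOn_Iic hf (by linarith) le_rfl)
    ((hf.mono Iio_subset_Iic_self).stronglyMeasurableAtFilter isOpen_Iio _ hx')
    (hf.continuousAt (Iic_mem_nhds (by linarith)))
  have h' := h.comp x (hasDerivAt_neg x)
  simp only [Function.comp_def, mul_neg, mul_one, neg_neg] at h'
  exact h'

variable {c₁ c₂ : ℝ} (hf : ContinuousOn f (Iic 0))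
  (hbd : ∀ w ≤ 0, f w ∈ Icc (c₁ * -w) (c₂ * -w))
include hf hbd

lemma negIntegral_sub_mem_Icc {a b : ℝ} (hb : 0 ≤ b) (hba : b ≤ a) :
    negIntegral f a - negIntegral f b ∈
      Icc (c₁ * (a ^ 2 - b ^ 2) / 2) (c₂ * (a ^ 2 - b ^ 2) / 2) := by
  have hsplit : negIntegral f a - negIntegral f b = ∫ w in (-a)..(-b), f w := by
    rw [negIntegral, negIntegral, ← intervalIntegral.integral_add_adjacent_intervals
      (intervalIntegrable_of_continuousOn_Iic hf (b := -b) (by linarith) (by linarith))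
      (intervalIntegrable_of_continuousOn_Iic hf (by linarith) le_rfl)]
    ring
  have hle : -a ≤ -b := neg_le_neg hba
  have hmem {w : ℝ} (hw : w ∈ Icc (-a) (-b)) : w ≤ 0 := by linarith [hw.2]
  have hfi : IntervalIntegrable f volume (-a) (-b) :=
    intervalIntegrable_of_continuousOn_Iic hf (by linarith) (by linarith)
  have hlin (c : ℝ) : IntervalIntegrable (fun w => c * -w) volume (-a) (-b) :=
    (continuous_const.mul continuous_neg).intervalIntegrable _ _
  rw [hsplit, ← integral_mul_neg_id, ← integral_mul_neg_id]
  exact ⟨intervalIntegral.integral_mono_on hle (hlin c₁) hfi fun w hw => (hbd w (hmem hw)).1,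
    intervalIntegral.integral_mono_on hle hfi (hlin c₂) fun w hw => (hbd w (hmem hw)).2⟩

lemma negIntegral_mem_Icc {x : ℝ} (hx : 0 ≤ x) :
    negIntegral f x ∈ Icc (c₁ * x ^ 2 / 2) (c₂ * x ^ 2 / 2) := by
  simpa using negIntegral_sub_mem_Icc hf hbd le_rfl hx

lemma strictMonoOn_negIntegral (hc₁ : 0 < c₁) : StrictMonoOn (negIntegral f) (Ici 0) := by
  intro b hb a _ hba
  have hpos : 0 < c₁ * (a ^ 2 - b ^ 2) / 2 := by
    have : b ^ 2 < a ^ 2 := pow_lt_pow_left₀ hba hb two_ne_zero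
    have : 0 < a ^ 2 - b ^ 2 := by linarith
    positivity
  linarith [(negIntegral_sub_mem_Icc hf hbd hb hba.le).1]

variable {φ : ℝ → ℝ} (hφ : ∀ N, 0 ≤ N → 0 ≤ φ N ∧ negIntegral f (φ N) = N ^ 2)
include hφ

omit hf hbd in
lemma pos_of_negIntegral_eq_sq {N : ℝ} (hN : 0 < N) : 0 < φ N := by
  obtain ⟨h0, hG⟩ := hφ N hN.le
  refine h0.lt_of_ne fun h => ?_
  rw [← h, negIntegral_zero] at hG
  nlinarith

lemma sqrt_mul_le_of_negIntegral_eq_sq {N : ℝ} (hN : 0 ≤ N) :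
    √(c₁ / 2) * φ N ≤ N ∧ N ≤ √(c₂ / 2) * φ N := by
  obtain ⟨h0, hG⟩ := hφ N hN
  obtain ⟨hlo, hhi⟩ := negIntegral_mem_Icc hf hbd h0
  rw [hG] at hlo hhi
  have hsqrt (c : ℝ) : √(c / 2) * φ N = √(c / 2 * φ N ^ 2) := by
    rw [sqrt_mul' _ (sq_nonneg _), sqrt_sq h0]
  constructor
  · calc √(c₁ / 2) * φ N = √(c₁ / 2 * φ N ^ 2) := hsqrt c₁
      _ ≤ √(N ^ 2) := sqrt_le_sqrt (by linarith)
      _ = N := sqrt_sq hN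
  · calc N = √(N ^ 2) := (sqrt_sq hN).symm
      _ ≤ √(c₂ / 2 * φ N ^ 2) := sqrt_le_sqrt (by linarith)
      _ = √(c₂ / 2) * φ N := (hsqrt c₂).symm

lemma monotoneOn_of_negIntegral_eq_sq (hc₁ : 0 < c₁) : MonotoneOn φ (Ici 0) := by
  intro M hM N hN hMN
  rw [← (strictMonoOn_negIntegral hf hbd hc₁).le_iff_le (hφ M hM).1 (hφ N hN).1,
    (hφ M hM).2, (hφ N hN).2]
  exact pow_le_pow_left₀ hM hMN 2

lemma Ioi_subset_image_of_negIntegral_eq_sq (hc₁ : 0 < c₁) : Ioi 0 ⊆ φ '' Ioi 0 := by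
  intro x hx
  have hGx : 0 < negIntegral f x :=
    lt_of_lt_of_le (by have := mem_Ioi.mp hx; positivity) (negIntegral_mem_Icc hf hbd hx.le).1
  refine ⟨√(negIntegral f x), sqrt_pos.2 hGx, ?_⟩
  obtain ⟨h0, hG⟩ := hφ _ (sqrt_nonneg _)
  refine (strictMonoOn_negIntegral hf hbd hc₁).injOn h0 (mem_Ici.2 hx.le) ?_
  rw [hG, sq_sqrt hGx.le]

lemma continuousAt_of_negIntegral_eq_sq (hc₁ : 0 < c₁) {N : ℝ} (hN : 0 < N) :
    ContinuousAt φ N :=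
  continuousAt_of_monotoneOn_of_image_mem_nhds
    ((monotoneOn_of_negIntegral_eq_sq hf hbd hφ hc₁).mono Ioi_subset_Ici_self) (Ioi_mem_nhds hN)
    (mem_of_superset (Ioi_mem_nhds (pos_of_negIntegral_eq_sq hφ hN))
      (Ioi_subset_image_of_negIntegral_eq_sq hf hbd hφ hc₁))

lemma hasDerivAt_of_negIntegral_eq_sq (hc₁ : 0 < c₁) {N : ℝ} (hN : 0 < N) :
    HasDerivAt φ (2 * N / f (-φ N)) N := by
  have hφN := pos_of_negIntegral_eq_sq hφ hN
  have hfφ : 0 < f (-φ N) :=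
    lt_of_lt_of_le (by rw [neg_neg]; positivity) (hbd (-φ N) (by linarith)).1
  have hG : HasDerivAt (fun x => √(negIntegral f x)) (f (-φ N) / (2 * N)) (φ N) := by
    have := (hasDerivAt_negIntegral hf hφN).sqrt (by rw [(hφ N hN.le).2]; positivity)
    rwa [(hφ N hN.le).2, sqrt_sq hN.le] at this
  have hinv := hG.of_local_left_inverse (continuousAt_of_negIntegral_eq_sq hf hbd hφ hc₁ hN)
    (by positivity) (by
      filter_upwards [Ioi_mem_nhds hN] with M hM
      rw [(hφ M hM.le).2, sqrt_sq hM.le])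
  rwa [inv_div] at hinv

lemma div_apply_neg_mem_Icc_of_negIntegral_eq_sq (hc₁ : 0 < c₁) {N : ℝ} (hN : 0 < N) :
    2 * N / f (-φ N) ∈ Icc (2 * √(c₁ / 2) / c₂) (2 * √(c₂ / 2) / c₁) := by
  have hφN := pos_of_negIntegral_eq_sq hφ hN
  obtain ⟨hlo, hhi⟩ := hbd (-φ N) (by linarith)
  rw [neg_neg] at hlo hhi
  obtain ⟨hNlo, hNhi⟩ := sqrt_mul_le_of_negIntegral_eq_sq hf hbd hφ hN.le
  have hfφ : 0 < f (-φ N) := lt_of_lt_of_le (by positivity) hlo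
  have hc₂ : 0 < c₂ := by nlinarith
  constructor
  · calc 2 * √(c₁ / 2) / c₂ = 2 * (√(c₁ / 2) * φ N) / (c₂ * φ N) := by field_simp
      _ ≤ 2 * N / f (-φ N) := div_le_div₀ (by positivity) (by linarith) hfφ hhi
  · calc 2 * N / f (-φ N) ≤ 2 * (√(c₂ / 2) * φ N) / (c₁ * φ N) :=
          div_le_div₀ (by positivity) (by linarith) (by positivity) hlo
      _ = 2 * √(c₂ / 2) / c₁ := by field_simp

end NegIntegral

/-- Differentiability of the support function `φ` of the learned weight
distribution: `φ'(N) = −2 N K(−φ(N)) / φ(N)` and `C₁ ≤ φ' ≤ C₂` on `(0,∞)`,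
with constants depending only on `K_m` and `K_M`. -/
theorem stmt17 (K : ℝ → ℝ) (hKcont : ContinuousOn K (Set.Iio 0))
    (hKneg : ∀ w : ℝ, w < 0 → K w < 0)
    (Km KM : ℝ) (hKm : 0 < Km) (hKmM : Km ≤ KM)
    (hKbd : ∀ w : ℝ, w < 0 → Km ≤ |K w| ∧ |K w| ≤ KM)
    (φ : ℝ → ℝ)
    (hφ : ∀ N : ℝ, 0 ≤ N →
      0 ≤ φ N ∧ N ^ 2 = ∫ w in Set.Ioc (-φ N) (0 : ℝ), w / K w) :
    ∃ C₁ C₂ : ℝ, 0 < C₁ ∧ 0 < C₂ ∧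
      ∀ N : ℝ, 0 < N →
        HasDerivAt φ (-2 * N * K (-φ N) / φ N) N ∧
        C₁ ≤ -2 * N * K (-φ N) / φ N ∧ -2 * N * K (-φ N) / φ N ≤ C₂ := by
  have hKM : 0 < KM := hKm.trans_le hKmM
  set f : ℝ → ℝ := fun w => w / K w
  have hbd (w : ℝ) (hw : w ≤ 0) : f w ∈ Icc (KM⁻¹ * -w) (Km⁻¹ * -w) :=
    div_mem_Icc_of_abs_mem_Icc hKneg hKm hKbd hw
  have hf : ContinuousOn f (Iic 0) :=
    continuousOn_Iic_zero_of_mem_Icc (continuousOn_id.div hKcont fun w hw => (hKneg w hw).ne) hbd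
  have hφ' (N : ℝ) (hN : 0 ≤ N) : 0 ≤ φ N ∧ negIntegral f (φ N) = N ^ 2 :=
    ⟨(hφ N hN).1, by
      rw [negIntegral, intervalIntegral.integral_of_le (by linarith [(hφ N hN).1]),
        (hφ N hN).2]⟩
  refine ⟨2 * √(KM⁻¹ / 2) / Km⁻¹, 2 * √(Km⁻¹ / 2) / KM⁻¹, by positivity, by positivity,
    fun N hN => ?_⟩
  have hφN := pos_of_negIntegral_eq_sq hφ' hN
  have hKφ : K (-φ N) ≠ 0 := (hKneg _ (by linarith)).ne
  have hvalue : 2 * N / f (-φ N) = -2 * N * K (-φ N) / φ N := by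
    simp only [f]
    field_simp
  rw [← hvalue]
  exact ⟨hasDerivAt_of_negIntegral_eq_sq hf hbd hφ' (by positivity) hN,
    div_apply_neg_mem_Icc_of_negIntegral_eq_sq hf hbd hφ' (by positivity) hN⟩
end

section
/- Uniqueness of the inhibitory steady state under the learning rule (Proposition 6.2, uniqueness part): in the case σ(N) = N, assume I : ℝ → ℝ is bounded, differentiable with I'(w) ≥ 0 for all w, and let K : (−∞,0) → ℝ be continuous with K(w) < 0 and K_m ≤ |K(w)| ≤ K_M for all w < 0 (0 < K_m ≤ K_M). For N̄ ≥ 0 let φ(N̄) ≥ 0 be the unique number with N̄² = ∫_{−φ(N̄)}^{0} (w/K(w)) dw, and define Φ(N̄) = ∫_{−φ(N̄)}^{0} (w/K(w)) · Z_{N̄,I}(w) dw, where Z is taken with σ(N̄) = N̄. Then there is at most one N̄ > 0 such that Φ(N̄) = a N̄. -/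
open MeasureTheory Real Set Filter

/-!
Write `ρ(w) = w / K(w) ≥ 0` and `Z_N(w) = Z(I(w) + w N)`, where `Z(c)` is the partition function
with the shift `c`. Since `v' ≥ v` in the integrand, `Z` is antitone in `c`; as `I` is monotone,
`Z_N` is antitone in `w`, and for `w ≤ 0` it is monotone in `N`. Hence `Φ(N) / N²` is the
`ρ`-average of `Z_N` over `(-φ(N), 0]`, and this average is nondecreasing in `N`: enlarging `N`
raises `Z_N` and (as `N² = ∫ ρ`) moves the left end `-φ(N)` further left, where the antitone
`Z_N` is larger. The equation `Φ(N) / N² = a / N` has a strictly decreasing right-hand side, so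
it has at most one positive solution.
-/

namespace LIF

noncomputable def innerZ (a VR VF c v : ℝ) : ℝ :=
  ∫ v' in Icc (max VR v) VF, exp ((v' - v) * (v' + v - 2 * c) / (2 * a))

noncomputable def Z (a VR VF c : ℝ) : ℝ := ∫ v in Iic VF, innerZ a VR VF c v

lemma Zfun_id_eq (a VR VF : ℝ) (I : ℝ → ℝ) (w N : ℝ) :
    Zfun a VR VF I (fun x => x) w N = Z a VR VF (I w + w * N) := by
  simp only [Zfun, Z, innerZ, mul_add, ← sub_sub, ← mul_assoc]

section Partition

variable {a VR VF : ℝ}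

lemma innerZ_nonneg (c v : ℝ) : 0 ≤ innerZ a VR VF c v :=
  setIntegral_nonneg measurableSet_Icc fun _ _ => (exp_pos _).le

lemma innerZ_eq (c v : ℝ) :
    innerZ a VR VF c v = exp (-(2 * a)⁻¹ * (v - c) ^ 2) *
      ∫ v' in Icc (max VR v) VF, exp ((v' - c) ^ 2 / (2 * a)) := by
  rw [innerZ, ← integral_const_mul]
  congr 1 with v'
  rw [← exp_add]
  ring_nf

lemma innerZ_anti (ha : 0 < a) (v : ℝ) {c c' : ℝ} (h : c ≤ c') :
    innerZ a VR VF c' v ≤ innerZ a VR VF c v := by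
  refine setIntegral_mono_on (Continuous.integrableOn_Icc (by fun_prop))
    (Continuous.integrableOn_Icc (by fun_prop)) measurableSet_Icc fun v' hv' => ?_
  have hv : v ≤ v' := (le_max_right VR v).trans hv'.1
  gcongr

lemma integrable_innerZ (ha : 0 < a) (c : ℝ) : Integrable (innerZ a VR VF c) := by
  set g : ℝ → ℝ := fun v' => exp ((v' - c) ^ 2 / (2 * a))
  have hg : ∀ v, IntegrableOn g (Icc (max VR v) VF) := fun v =>
    Continuous.integrableOn_Icc (by fun_prop)
  have hmono : ∀ {s t : Set ℝ}, s ⊆ t → IntegrableOn g t →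
      ∫ v' in s, g v' ≤ ∫ v' in t, g v' := fun hst ht =>
    setIntegral_mono_set ht (ae_of_all _ fun _ => (exp_pos _).le) hst.eventuallyLE
  have hanti : Antitone fun v => ∫ v' in Icc (max VR v) VF, g v' := fun v w hvw =>
    hmono (Icc_subset_Icc_left (max_le_max le_rfl hvw)) (hg v)
  have hgauss : Integrable fun v => exp (-(2 * a)⁻¹ * (v - c) ^ 2) :=
    (integrable_exp_neg_mul_sq (by positivity)).comp_sub_right c
  have hbound : ∀ v, ‖∫ v' in Icc (max VR v) VF, g v'‖ ≤ ∫ v' in Icc VR VF, g v' := by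
    intro v
    rw [norm_of_nonneg (setIntegral_nonneg measurableSet_Icc fun _ _ => (exp_pos _).le)]
    exact hmono (Icc_subset_Icc_left (le_max_left _ _))
      (Continuous.integrableOn_Icc (by fun_prop))
  rw [show innerZ a VR VF c = _ from funext (innerZ_eq c)]
  exact hgauss.mul_bdd hanti.measurable.aestronglyMeasurable (ae_of_all _ hbound)

lemma Z_nonneg (c : ℝ) : 0 ≤ Z a VR VF c :=
  setIntegral_nonneg measurableSet_Iic fun v _ => innerZ_nonneg c v

lemma Z_antitone (ha : 0 < a) : Antitone (Z a VR VF) := fun _ _ h =>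
  setIntegral_mono_on (integrable_innerZ ha _).integrableOn (integrable_innerZ ha _).integrableOn
    measurableSet_Iic fun v _ => innerZ_anti ha v h

end Partition

theorem setIntegral_Ioc_mul_le_of_antitone {μ : Measure ℝ} {ρ f : ℝ → ℝ} {a b c : ℝ}
    (hab : a ≤ b) (hbc : b ≤ c) (hf : Antitone f) (hρ : ∀ x ∈ Ioc a c, 0 ≤ ρ x)
    (hρi : IntegrableOn ρ (Ioc a c) μ) (hρfi : IntegrableOn (fun x => ρ x * f x) (Ioc a c) μ) :
    (∫ x in Ioc b c, ρ x * f x ∂μ) * ∫ x in Ioc a c, ρ x ∂μ ≤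
      (∫ x in Ioc a c, ρ x * f x ∂μ) * ∫ x in Ioc b c, ρ x ∂μ := by
  have hL : Ioc a b ⊆ Ioc a c := Ioc_subset_Ioc_right hbc
  have hR : Ioc b c ⊆ Ioc a c := Ioc_subset_Ioc_left hab
  rw [← Ioc_union_Ioc_eq_Ioc hab hbc,
    setIntegral_union (Ioc_disjoint_Ioc_of_le le_rfl) measurableSet_Ioc
      (hρi.mono_set hL) (hρi.mono_set hR),
    setIntegral_union (Ioc_disjoint_Ioc_of_le le_rfl) measurableSet_Ioc
      (hρfi.mono_set hL) (hρfi.mono_set hR)]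
  have hleft : (∫ x in Ioc a b, ρ x ∂μ) * f b ≤ ∫ x in Ioc a b, ρ x * f x ∂μ := by
    rw [← integral_mul_const]
    exact setIntegral_mono_on ((hρi.mono_set hL).mul_const _) (hρfi.mono_set hL)
      measurableSet_Ioc fun x hx => mul_le_mul_of_nonneg_left (hf hx.2) (hρ x (hL hx))
  have hright : ∫ x in Ioc b c, ρ x * f x ∂μ ≤ (∫ x in Ioc b c, ρ x ∂μ) * f b := by
    rw [← integral_mul_const]
    exact setIntegral_mono_on (hρfi.mono_set hR) ((hρi.mono_set hR).mul_const _)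
      measurableSet_Ioc fun x hx => mul_le_mul_of_nonneg_left (hf hx.1.le) (hρ x (hR hx))
  have hSL : 0 ≤ ∫ x in Ioc a b, ρ x ∂μ :=
    setIntegral_nonneg measurableSet_Ioc fun x hx => hρ x (hL hx)
  have hSR : 0 ≤ ∫ x in Ioc b c, ρ x ∂μ :=
    setIntegral_nonneg measurableSet_Ioc fun x hx => hρ x (hR hx)
  nlinarith [mul_le_mul_of_nonneg_left hright hSL, mul_le_mul_of_nonneg_left hleft hSR]

section SteadyState

variable {a VR VF Km : ℝ} {I K φ : ℝ → ℝ}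

lemma div_apply_nonneg_of_nonpos (hKneg : ∀ w : ℝ, w < 0 → K w < 0) {w : ℝ} (hw : w ≤ 0) :
    0 ≤ w / K w := by
  rcases hw.lt_or_eq with hw | rfl
  · exact div_nonneg_of_nonpos hw.le (hKneg w hw).le
  · simp

lemma integrableOn_div_Ioc (hKcont : ContinuousOn K (Iio 0)) (hKm : 0 < Km)
    (hKbd : ∀ w : ℝ, w < 0 → Km ≤ |K w|) (α : ℝ) :
    IntegrableOn (fun w => w / K w) (Ioc α 0) := by
  have hK0 : ∀ w ∈ Ioo α 0, K w ≠ 0 := fun w hw =>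
    abs_pos.1 (hKm.trans_le (hKbd w hw.2))
  rw [integrableOn_Ioc_iff_integrableOn_Ioo]
  refine IntegrableOn.of_bound measure_Ioo_lt_top
    ((continuousOn_id.div (hKcont.mono fun _ hw => hw.2) hK0).aestronglyMeasurable
      measurableSet_Ioo) (|α| / Km)
    (ae_restrict_of_forall_mem measurableSet_Ioo fun w hw => ?_)
  rw [norm_div, Real.norm_eq_abs, Real.norm_eq_abs]
  have hwα : |w| ≤ |α| := by
    rw [abs_of_neg hw.2, abs_of_neg (hw.1.trans hw.2)]
    linarith [hw.1]
  exact div_le_div₀ (abs_nonneg α) hwα hKm (hKbd w hw.2)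

lemma monotone_add_mul (hI : Monotone I) {N : ℝ} (hN : 0 ≤ N) : Monotone fun w => I w + w * N :=
  hI.add (monotone_id.mul_const hN)

lemma integrableOn_div_mul_Z (ha : 0 < a) (hI : Monotone I) (hKcont : ContinuousOn K (Iio 0))
    (hKm : 0 < Km) (hKbd : ∀ w : ℝ, w < 0 → Km ≤ |K w|) {N : ℝ} (hN : 0 ≤ N) (α : ℝ) :
    IntegrableOn (fun w => w / K w * Z a VR VF (I w + w * N)) (Ioc α 0) :=
  (integrableOn_div_Ioc hKcont hKm hKbd α).mul_bdd
    ((Z_antitone ha).measurable.comp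
      (hI.measurable.add (measurable_id.mul_const N))).aestronglyMeasurable
    (ae_restrict_of_forall_mem measurableSet_Ioc fun w hw => by
      rw [Real.norm_eq_abs, abs_of_nonneg (Z_nonneg _)]
      exact Z_antitone ha (monotone_add_mul hI hN hw.1.le))

theorem le_of_steady_states (ha : 0 < a) (hI : Monotone I) (hKcont : ContinuousOn K (Iio 0))
    (hKneg : ∀ w : ℝ, w < 0 → K w < 0) (hKm : 0 < Km) (hKbd : ∀ w : ℝ, w < 0 → Km ≤ |K w|)
    (hφ : ∀ N : ℝ, 0 ≤ N → 0 ≤ φ N ∧ N ^ 2 = ∫ w in Ioc (-φ N) 0, w / K w)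
    {N₁ N₂ : ℝ} (hN₁ : 0 < N₁) (hle : N₁ ≤ N₂)
    (e₁ : ∫ w in Ioc (-φ N₁) 0, w / K w * Z a VR VF (I w + w * N₁) = a * N₁)
    (e₂ : ∫ w in Ioc (-φ N₂) 0, w / K w * Z a VR VF (I w + w * N₂) = a * N₂) :
    N₂ ≤ N₁ := by
  have hN₂ : 0 < N₂ := hN₁.trans_le hle
  obtain ⟨hφ₁, hS₁⟩ := hφ N₁ hN₁.le
  obtain ⟨hφ₂, hS₂⟩ := hφ N₂ hN₂.le
  have hρ : ∀ w : ℝ, w ≤ 0 → 0 ≤ w / K w := fun _ => div_apply_nonneg_of_nonpos hKneg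
  rcases lt_or_ge (φ N₂) (φ N₁) with hφlt | hφle
  · have hsq : N₂ ^ 2 ≤ N₁ ^ 2 := by
      rw [hS₁, hS₂]
      exact setIntegral_mono_set (integrableOn_div_Ioc hKcont hKm hKbd _)
        (ae_restrict_of_forall_mem measurableSet_Ioc fun w hw => hρ w hw.2)
        (Ioc_subset_Ioc_left (neg_le_neg hφlt.le)).eventuallyLE
    exact (pow_le_pow_iff_left₀ hN₂.le hN₁.le two_ne_zero).1 hsq
  have havg := setIntegral_Ioc_mul_le_of_antitone (μ := volume)
    (f := fun w => Z a VR VF (I w + w * N₂)) (neg_le_neg hφle) (neg_nonpos.2 hφ₁)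
    (fun _ _ h => Z_antitone ha (monotone_add_mul hI hN₂.le h)) (fun w hw => hρ w hw.2)
    (integrableOn_div_Ioc hKcont hKm hKbd _)
    (integrableOn_div_mul_Z ha hI hKcont hKm hKbd hN₂.le _)
  rw [← hS₁, ← hS₂, e₂] at havg
  have hcmp : a * N₁ ≤ ∫ w in Ioc (-φ N₁) 0, w / K w * Z a VR VF (I w + w * N₂) := by
    rw [← e₁]
    refine setIntegral_mono_on (integrableOn_div_mul_Z ha hI hKcont hKm hKbd hN₁.le _)
      (integrableOn_div_mul_Z ha hI hKcont hKm hKbd hN₂.le _) measurableSet_Ioc fun w hw => ?_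
    refine mul_le_mul_of_nonneg_left (Z_antitone ha ?_) (hρ w hw.2)
    nlinarith [hw.2]
  have hcross : a * N₁ * N₂ ^ 2 ≤ a * N₂ * N₁ ^ 2 := by
    nlinarith [mul_le_mul_of_nonneg_right hcmp (sq_nonneg N₂)]
  by_contra! hlt
  nlinarith [mul_pos (mul_pos (mul_pos ha hN₁) hN₂) (sub_pos.2 hlt)]

end SteadyState

end LIF

theorem stmt19_general (a VR VF : ℝ) (ha : 0 < a)
    (I : ℝ → ℝ) (hIdiff : Differentiable ℝ I) (hI' : ∀ w, 0 ≤ deriv I w)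
    (K : ℝ → ℝ) (hKcont : ContinuousOn K (Set.Iio 0))
    (hKneg : ∀ w : ℝ, w < 0 → K w < 0)
    (Km KM : ℝ) (hKm : 0 < Km)
    (hKbd : ∀ w : ℝ, w < 0 → Km ≤ |K w| ∧ |K w| ≤ KM)
    (φ : ℝ → ℝ)
    (hφ : ∀ N : ℝ, 0 ≤ N →
      0 ≤ φ N ∧ N ^ 2 = ∫ w in Set.Ioc (-φ N) (0 : ℝ), w / K w) :
    ∀ N₁ N₂ : ℝ, 0 < N₁ → 0 < N₂ →
      (∫ w in Set.Ioc (-φ N₁) (0 : ℝ),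
        (w / K w) * Zfun a VR VF I (fun x => x) w N₁) = a * N₁ →
      (∫ w in Set.Ioc (-φ N₂) (0 : ℝ),
        (w / K w) * Zfun a VR VF I (fun x => x) w N₂) = a * N₂ →
      N₁ = N₂ := by
  intro N₁ N₂ hN₁ hN₂ e₁ e₂
  have hI : Monotone I := monotone_of_deriv_nonneg hIdiff hI'
  have hKbd' : ∀ w : ℝ, w < 0 → Km ≤ |K w| := fun w hw => (hKbd w hw).1
  simp only [LIF.Zfun_id_eq] at e₁ e₂
  rcases le_total N₁ N₂ with h | h
  · exact le_antisymm h (LIF.le_of_steady_states ha hI hKcont hKneg hKm hKbd' hφ hN₁ h e₁ e₂)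
  · exact (le_antisymm h
      (LIF.le_of_steady_states ha hI hKcont hKneg hKm hKbd' hφ hN₂ h e₂ e₁)).symm

/-- Uniqueness of the inhibitory steady state under the learning rule
(Proposition 6.2, uniqueness part), in the case `σ(N) = N` and `I' ≥ 0`. -/
theorem stmt19 (a VR VF : ℝ) (ha : 0 < a) (hV : VR < VF)
    (I : ℝ → ℝ) (hIdiff : Differentiable ℝ I) (hI' : ∀ w, 0 ≤ deriv I w)
    (nI : ℝ) (hI : ∀ x, |I x| ≤ nI)
    (K : ℝ → ℝ) (hKcont : ContinuousOn K (Set.Iio 0))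
    (hKneg : ∀ w : ℝ, w < 0 → K w < 0)
    (Km KM : ℝ) (hKm : 0 < Km) (hKmM : Km ≤ KM)
    (hKbd : ∀ w : ℝ, w < 0 → Km ≤ |K w| ∧ |K w| ≤ KM)
    (φ : ℝ → ℝ)
    (hφ : ∀ N : ℝ, 0 ≤ N →
      0 ≤ φ N ∧ N ^ 2 = ∫ w in Set.Ioc (-φ N) (0 : ℝ), w / K w) :
    ∀ N₁ N₂ : ℝ, 0 < N₁ → 0 < N₂ →
      (∫ w in Set.Ioc (-φ N₁) (0 : ℝ),
        (w / K w) * Zfun a VR VF I (fun x => x) w N₁) = a * N₁ →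
      (∫ w in Set.Ioc (-φ N₂) (0 : ℝ),
        (w / K w) * Zfun a VR VF I (fun x => x) w N₂) = a * N₂ →
      N₁ = N₂ :=
  stmt19_general a VR VF ha I hIdiff hI' K hKcont hKneg Km KM hKm hKbd φ hφ
end
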